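/- arXiv:0904.3207 — 5 statements merged into one kernel-verified Lean document; each statement's English description precedes it below -/
import Mathlib

section
/- Lemma 1 (one-point moment estimate). For β > 0 and p ∈ [p₀, q), set γ(β,p) = I_W + 4(p−r)(J_W/(2p))^{p/(p−r)} (r/β)^{r/(p−r)}, Γ_{xy}(β,p) = γ(β,p)[n(x)n(y)]^{r/(p−r)}, and C(β,λ,p) = c_V + log ∫_ℝ exp((λ+β)|u|^p − a_V|u|^q) du − log ∫_ℝ exp(−β|u|^p − V(u)) du. Then for every λ > 0, β > 0, p ∈ [p₀, q), every vertex x ∈ V, and every ξ ∈ Ω, one has ∫_Ω exp(λ|ω(x)|^p) π_{{x}}(dω|ξ) ≤ exp( C(β,λ,p) + Σ_{y∼x} 2β|ξ(y)|^p/(n(x)n(y)) + Σ_{y∼x} Γ_{xy}(β,p) ), where π_{{x}} is the one-point specification kernel. -/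
open MeasureTheory Real Filter

noncomputable section

variable {V : Type} [Countable V] [DecidableEq V]

/-- The configuration equal to `σ` on `Λ` and to `ξ` off `Λ`. -/
def comb (Λ : Finset V) (σ : ↥Λ → ℝ) (ξ : V → ℝ) : V → ℝ :=
  fun x => if h : x ∈ Λ then σ ⟨x, h⟩ else ξ x

/-- The relative local Hamiltonian `H_Λ(·|ξ)`, evaluated at the full configuration
`ω = ω_Λ × ξ_{Λᶜ}`: the sum of `W(ω(x),ω(y))` over edges with both ends in `Λ`,
plus the sum of `W(ω(x),ω(y))` over edges with `x ∈ Λ`, `y ∉ Λ`, plus `Σ_{x∈Λ} V(ω(x))`. -/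
def ham (G : SimpleGraph V) [∀ v : V, Fintype (G.neighborSet v)]
    (W : ℝ → ℝ → ℝ) (P : ℝ → ℝ) (Λ : Finset V) (ω : V → ℝ) : ℝ :=
  (∑ x ∈ Λ, ∑ y ∈ G.neighborFinset x ∩ Λ, W (ω x) (ω y)) / 2
    + ∑ x ∈ Λ, ∑ y ∈ G.neighborFinset x \ Λ, W (ω x) (ω y)
    + ∑ x ∈ Λ, P (ω x)

/-- The normalizing constant `Z_Λ(ξ)`. -/
def partZ (G : SimpleGraph V) [∀ v : V, Fintype (G.neighborSet v)]
    (W : ℝ → ℝ → ℝ) (P : ℝ → ℝ) (Λ : Finset V) (ξ : V → ℝ) : ℝ :=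
  ∫ σ : ↥Λ → ℝ, Real.exp (- ham G W P Λ (comb Λ σ ξ))

/-- The local Gibbs specification kernel `π_Λ(·|ξ)`, a measure on `Ω = ℝ^V`. -/
def gibbsKer (G : SimpleGraph V) [∀ v : V, Fintype (G.neighborSet v)]
    (W : ℝ → ℝ → ℝ) (P : ℝ → ℝ) (Λ : Finset V) (ξ : V → ℝ) : Measure (V → ℝ) :=
  (ENNReal.ofReal (partZ G W P Λ ξ))⁻¹ •
    Measure.map (fun σ => comb Λ σ ξ)
      ((volume : Measure (↥Λ → ℝ)).withDensity
        fun σ => ENNReal.ofReal (Real.exp (- ham G W P Λ (comb Λ σ ξ))))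

/-- `μ` is a Gibbs measure: a probability measure solving the DLR equation. -/
def IsGibbsMeasure (G : SimpleGraph V) [∀ v : V, Fintype (G.neighborSet v)]
    (W : ℝ → ℝ → ℝ) (P : ℝ → ℝ) (μ : Measure (V → ℝ)) : Prop :=
  IsProbabilityMeasure μ ∧
    ∀ (Λ : Finset V) (A : Set (V → ℝ)), MeasurableSet A →
      μ A = ∫⁻ ω, gibbsKer G W P Λ ω A ∂μ

/-- The weight `w_α(x) = exp(-α ρ(o,x))`. -/
def wgt (G : SimpleGraph V) (o : V) (α : ℝ) (x : V) : ℝ :=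
  Real.exp (-α * (G.dist o x : ℝ))

/-- `‖ω‖_{p,α}^p = Σ_{x∈V} |ω(x)|^p w_α(x)`. -/
def sNorm (G : SimpleGraph V) (o : V) (p α : ℝ) (ω : V → ℝ) : ℝ :=
  ∑' x : V, |ω x| ^ p * wgt G o α x

/-- The set `L^p(V, w_α)` of tempered configurations. -/
def tempered (G : SimpleGraph V) (o : V) (p α : ℝ) : Set (V → ℝ) :=
  {ω | Summable fun x : V => |ω x| ^ p * wgt G o α x}

/-- The summability `Θ(α,θ) = Σ_x Σ_{y∼x} [n(x)n(y)]^θ w_α(x) < ∞`. -/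
def ThetaFin (G : SimpleGraph V) [∀ v : V, Fintype (G.neighborSet v)]
    (o : V) (α θ : ℝ) : Prop :=
  Summable fun x : V =>
    (∑ y ∈ G.neighborFinset x, ((G.degree x : ℝ) * (G.degree y : ℝ)) ^ θ) * wgt G o α x

/-!
With a single free site `x`, `π_{x}(·|ξ)` is the one-dimensional law with density proportional to
`exp (-U t)`, where `U t = ∑_{y ∼ x} W(t, ξ y) + V t`. Young's inequality, applied on each edge
`xy` with weight `β / (n(x) n(y))`, gives `|U t - V t| ≤ β |t|^p + S`, where the weights sum to at
most `β` and `2 S` is the boundary term of the estimate. Then the numerator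
`∫ exp(λ|t|^p - U t) dt` is at most `e^{S + c_V} ∫ exp((λ + β)|t|^p - a_V|t|^q) dt`, while the
partition function `∫ exp(-U)` is at least `e^{-S} ∫ exp(-β|t|^p - V t) dt`.
-/

open scoped ENNReal

def youngConst (c r p η : ℝ) : ℝ :=
  (p - r) * (c / p) ^ (p / (p - r)) * (r / η) ^ (r / (p - r))

/-- Young's inequality with exponents `p / r` and `p / (p - r)`, after rescaling `t ^ r` by
`(η p / r) ^ (r / p)` so that the `t ^ p` term has coefficient `η`. -/
theorem mul_rpow_le_mul_rpow_add_youngConst {r p c η t : ℝ} (hr : 0 < r) (hrp : r < p)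
    (hc : 0 ≤ c) (hη : 0 < η) (ht : 0 ≤ t) :
    c * t ^ r ≤ η * t ^ p + youngConst c r p η := by
  have hp : 0 < p := hr.trans hrp
  have hpr : 0 < p - r := sub_pos.mpr hrp
  have hbase : 0 < η * p / r := by positivity
  set X : ℝ := (η * p / r) ^ (r / p) with hX
  have hXpos : 0 < X := rpow_pos_of_pos hbase _
  have hconj : (p / r).HolderConjugate (p / (p - r)) := by
    rw [Real.holderConjugate_iff_eq_conjExponent ((one_lt_div hr).mpr hrp)]
    field_simp
  have hfirst : (X * t ^ r) ^ (p / r) / (p / r) = η * t ^ p := by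
    rw [mul_rpow hXpos.le (rpow_nonneg ht r), hX, ← rpow_mul hbase.le, ← rpow_mul ht,
      show r / p * (p / r) = 1 by field_simp, show r * (p / r) = p by field_simp, rpow_one]
    field_simp
  have hsecond : (c / X) ^ (p / (p - r)) / (p / (p - r)) = youngConst c r p η := by
    have hppow : p ^ (p / (p - r)) = p ^ (r / (p - r)) * p := by
      rw [show p / (p - r) = r / (p - r) + 1 by field_simp; ring, rpow_add hp, rpow_one]
    rw [div_rpow hc hXpos.le, hX, ← rpow_mul hbase.le,
      show r / p * (p / (p - r)) = r / (p - r) by field_simp, youngConst, div_rpow hc hp.le,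
      div_rpow (by positivity) hr.le, mul_rpow hη.le hp.le, div_rpow hr.le hη.le, hppow]
    have : 0 < η ^ (r / (p - r)) := rpow_pos_of_pos hη _
    have : 0 < p ^ (r / (p - r)) := rpow_pos_of_pos hp _
    have : 0 < r ^ (r / (p - r)) := rpow_pos_of_pos hr _
    field_simp
  calc c * t ^ r = X * t ^ r * (c / X) := by field_simp
    _ ≤ (X * t ^ r) ^ (p / r) / (p / r) + (c / X) ^ (p / (p - r)) / (p / (p - r)) :=
      Real.young_inequality_of_nonneg (by positivity) (div_nonneg hc hXpos.le) hconj
    _ = η * t ^ p + youngConst c r p η := by rw [hfirst, hsecond]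

theorem youngConst_div {c r p β m : ℝ} (hr : 0 ≤ r) (hβ : 0 ≤ β) (hm : 0 ≤ m) :
    youngConst c r p (β / m) = youngConst c r p β * m ^ (r / (p - r)) := by
  rw [youngConst, youngConst, div_div_eq_mul_div, mul_div_right_comm,
    mul_rpow (div_nonneg hr hβ) hm, ← mul_assoc]

theorem integrable_exp_neg_mul_abs_rpow {b q : ℝ} (hb : 0 < b) (hq : 0 < q) :
    Integrable fun t : ℝ => exp (-(b * |t| ^ q)) := by
  have hIoi : IntegrableOn (fun t : ℝ => exp (-(b * |t| ^ q))) (Set.Ioi 0) := by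
    refine (integrableOn_rpow_mul_exp_neg_mul_rpow (s := 0) (by norm_num) hq hb).congr_fun
      (fun t ht => ?_) measurableSet_Ioi
    simp [abs_of_pos (Set.mem_Ioi.mp ht)]
  rw [← integrableOn_univ, ← Set.Iic_union_Ioi (a := 0), integrableOn_union,
    ← (Measure.measurePreserving_neg volume).integrableOn_comp_preimage
      (Homeomorph.neg ℝ).measurableEmbedding]
  simpa [Function.comp_def, integrableOn_Ici_iff_integrableOn_Ioi] using hIoi

theorem integrable_exp_mul_abs_rpow_sub {a b p q : ℝ} (ha : 0 < a) (hp : 0 < p) (hpq : p < q) :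
    Integrable fun t : ℝ => exp (b * |t| ^ p - a * |t| ^ q) := by
  have hdom : ∀ t : ℝ,
      b * |t| ^ p - a * |t| ^ q ≤ youngConst |b| p q (a / 2) + -(a / 2 * |t| ^ q) := by
    intro t
    have := mul_rpow_le_mul_rpow_add_youngConst hp hpq (abs_nonneg b) (half_pos ha)
      (abs_nonneg t)
    nlinarith [mul_le_mul_of_nonneg_right (le_abs_self b) (rpow_nonneg (abs_nonneg t) p)]
  refine ((integrable_exp_neg_mul_abs_rpow (half_pos ha) (hp.trans hpq)).const_mul
    (exp (youngConst |b| p q (a / 2)))).mono' (by fun_prop) (Eventually.of_forall fun t => ?_)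
  rw [norm_of_nonneg (exp_pos _).le, ← exp_add]
  exact exp_le_exp.mpr (hdom t)

theorem integrable_exp_of_le {g : ℝ → ℝ} (hg : Measurable g) {a b c p q : ℝ} (ha : 0 < a)
    (hp : 0 < p) (hpq : p < q) (hle : ∀ t, g t ≤ c + (b * |t| ^ p - a * |t| ^ q)) :
    Integrable fun t => exp (g t) := by
  refine ((integrable_exp_mul_abs_rpow_sub (b := b) ha hp hpq).const_mul (exp c)).mono'
    hg.exp.aestronglyMeasurable (Eventually.of_forall fun t => ?_)
  rw [norm_of_nonneg (exp_pos _).le, ← exp_add]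
  exact exp_le_exp.mpr (hle t)

theorem inv_ofReal_integral_mul_lintegral_le {U P : ℝ → ℝ} (hU : Measurable U)
    (hPm : Measurable P) {a c p q β S lam : ℝ} (ha : 0 < a) (hp : 0 < p) (hpq : p < q)
    (hP : ∀ t, a * |t| ^ q - c ≤ P t) (hUP : ∀ t, |U t - P t| ≤ β * |t| ^ p + S) :
    (ENNReal.ofReal (∫ t, exp (-U t)))⁻¹ *
        ∫⁻ t, ENNReal.ofReal (exp (-U t)) * ENNReal.ofReal (exp (lam * |t| ^ p)) ≤
      ENNReal.ofReal (exp (c + log (∫ u, exp ((lam + β) * |u| ^ p - a * |u| ^ q))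
        - log (∫ u, exp (-β * |u| ^ p - P u)) + 2 * S)) := by
  set A := ∫ u, exp ((lam + β) * |u| ^ p - a * |u| ^ q)
  set B := ∫ u, exp (-β * |u| ^ p - P u)
  have hA : Integrable fun u => exp ((lam + β) * |u| ^ p - a * |u| ^ q) :=
    integrable_exp_mul_abs_rpow_sub ha hp hpq
  have hB : Integrable fun u => exp (-β * |u| ^ p - P u) :=
    integrable_exp_of_le (c := c) (b := -β) (by fun_prop) ha hp hpq fun u => by
      linarith [hP u]
  have hZ : Integrable fun t => exp (-U t) :=
    integrable_exp_of_le (c := S + c) (b := β) hU.neg ha hp hpq fun t => by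
      linarith [hP t, (abs_le.mp (hUP t)).1]
  have hnum : ∫⁻ t, ENNReal.ofReal (exp (-U t)) * ENNReal.ofReal (exp (lam * |t| ^ p)) ≤
      ENNReal.ofReal (exp (S + c) * A) := by
    rw [← integral_const_mul, ofReal_integral_eq_lintegral_ofReal (hA.const_mul _)
      (Eventually.of_forall fun t => by positivity)]
    refine lintegral_mono fun t => ?_
    rw [← ENNReal.ofReal_mul (exp_pos _).le, ← exp_add, ← exp_add]
    exact ENNReal.ofReal_le_ofReal (exp_le_exp.mpr (by linarith [hP t, (abs_le.mp (hUP t)).1]))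
  have hden : exp (-S) * B ≤ ∫ t, exp (-U t) := by
    rw [← integral_const_mul]
    refine integral_mono (hB.const_mul _) hZ fun t => ?_
    rw [← exp_add]
    exact exp_le_exp.mpr (by linarith [(abs_le.mp (hUP t)).2])
  have hBpos : 0 < B := integral_exp_pos hB
  calc (ENNReal.ofReal (∫ t, exp (-U t)))⁻¹ *
        ∫⁻ t, ENNReal.ofReal (exp (-U t)) * ENNReal.ofReal (exp (lam * |t| ^ p))
      ≤ (ENNReal.ofReal (exp (-S) * B))⁻¹ * ENNReal.ofReal (exp (S + c) * A) :=
        mul_le_mul' (ENNReal.inv_le_inv.mpr (ENNReal.ofReal_le_ofReal hden)) hnum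
    _ = ENNReal.ofReal (exp ((S + c + log A) - (-S + log B))) := by
        rw [exp_sub, exp_add (S + c), exp_add (-S), exp_log (integral_exp_pos hA), exp_log hBpos,
          ENNReal.ofReal_div_of_pos (by positivity), ENNReal.div_eq_inv_mul]
    _ = _ := by congr 2; ring

/-- The constant `γ(β, p)` of the estimate. -/
def couplingConst (IW JW r p β : ℝ) : ℝ :=
  IW + 4 * (p - r) * (JW / (2 * p)) ^ (p / (p - r)) * (r / β) ^ (r / (p - r))

theorem couplingConst_eq (IW JW r p β : ℝ) :
    couplingConst IW JW r p β = IW + 4 * youngConst (JW / 2) r p β := by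
  rw [couplingConst, youngConst, div_div]
  ring

theorem abs_le_of_growth_bound {w u v IW JW r p β m : ℝ}
    (hw : |w| ≤ (IW + JW * (|u| ^ r + |v| ^ r)) / 2) (hIW : 0 ≤ IW) (hJW : 0 ≤ JW)
    (hr : 0 < r) (hrp : r < p) (hβ : 0 < β) (hm : 1 ≤ m) :
    |w| ≤ β / m * |u| ^ p +
      (β * |v| ^ p / m + couplingConst IW JW r p β * m ^ (r / (p - r)) / 2) := by
  have hη : 0 < β / m := div_pos hβ (zero_lt_one.trans_le hm)
  have hK : youngConst (JW / 2) r p (β / m) = youngConst (JW / 2) r p β * m ^ (r / (p - r)) :=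
    youngConst_div hr.le hβ.le (zero_le_one.trans hm)
  have hJW2 : 0 ≤ JW / 2 := by positivity
  have hu := mul_rpow_le_mul_rpow_add_youngConst hr hrp hJW2 hη (abs_nonneg u)
  have hv := mul_rpow_le_mul_rpow_add_youngConst hr hrp hJW2 hη (abs_nonneg v)
  have hme : 1 ≤ m ^ (r / (p - r)) := one_le_rpow hm (div_nonneg hr.le (sub_pos.mpr hrp).le)
  rw [couplingConst_eq, mul_div_right_comm β, add_mul, mul_assoc 4, ← hK]
  nlinarith

section Neighborhood

variable {V : Type*} (G : SimpleGraph V) [∀ v : V, Fintype (G.neighborSet v)]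
  (W : ℝ → ℝ → ℝ) (P : ℝ → ℝ)

def singleSiteHam (ξ : V → ℝ) (x : V) (t : ℝ) : ℝ :=
  ∑ y ∈ G.neighborFinset x, W t (ξ y) + P t

theorem continuous_singleSiteHam (hW : Continuous (Function.uncurry W)) (hP : Continuous P)
    (ξ : V → ℝ) (x : V) : Continuous (singleSiteHam G W P ξ x) :=
  (continuous_finsetSum _ fun _ _ => hW.comp (continuous_id.prodMk continuous_const)).add hP

theorem one_le_degree_mul_degree {x y : V} (h : G.Adj x y) :
    (1 : ℝ) ≤ G.degree x * G.degree y := by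
  have hx : 0 < G.degree x := (G.degree_pos_iff_exists_adj x).mpr ⟨y, h⟩
  have hy : 0 < G.degree y := (G.degree_pos_iff_exists_adj y).mpr ⟨x, h.symm⟩
  exact_mod_cast Nat.mul_pos hx hy

theorem sum_one_div_degree_mul_degree_le_one (x : V) :
    ∑ y ∈ G.neighborFinset x, 1 / ((G.degree x : ℝ) * G.degree y) ≤ 1 := by
  calc ∑ y ∈ G.neighborFinset x, 1 / ((G.degree x : ℝ) * G.degree y)
      ≤ ∑ y ∈ G.neighborFinset x, 1 / (G.degree x : ℝ) := by
        refine Finset.sum_le_sum fun y hy => ?_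
        have h := (G.mem_neighborFinset x y).mp hy
        have hx : (0 : ℝ) < G.degree x := by
          exact_mod_cast (G.degree_pos_iff_exists_adj x).mpr ⟨y, h⟩
        have hy : (1 : ℝ) ≤ G.degree y := by
          exact_mod_cast (G.degree_pos_iff_exists_adj y).mpr ⟨x, h.symm⟩
        exact one_div_le_one_div_of_le hx (le_mul_of_one_le_right hx.le hy)
    _ = (G.degree x : ℝ) / G.degree x := by
        rw [Finset.sum_const, SimpleGraph.card_neighborFinset_eq_degree, nsmul_eq_mul, mul_one_div]
    _ ≤ 1 := div_self_le_one _

theorem abs_singleSiteHam_sub_le {IW JW r p β : ℝ}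
    (hW : ∀ u v : ℝ, |W u v| ≤ (IW + JW * (|u| ^ r + |v| ^ r)) / 2) (hIW : 0 ≤ IW)
    (hJW : 0 ≤ JW) (hr : 0 < r) (hrp : r < p) (hβ : 0 < β) (ξ : V → ℝ) (x : V) (t : ℝ) :
    |singleSiteHam G W P ξ x t - P t| ≤ β * |t| ^ p +
      ∑ y ∈ G.neighborFinset x, (β * |ξ y| ^ p / ((G.degree x : ℝ) * G.degree y) +
        couplingConst IW JW r p β * ((G.degree x : ℝ) * G.degree y) ^ (r / (p - r)) / 2) := by
  set N := G.neighborFinset x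
  have hcoef : ∑ y ∈ N, β / ((G.degree x : ℝ) * G.degree y) ≤ β := by
    have := mul_le_mul_of_nonneg_left (sum_one_div_degree_mul_degree_le_one G x) hβ.le
    simpa only [Finset.mul_sum, mul_one_div, mul_one] using this
  calc |singleSiteHam G W P ξ x t - P t| = |∑ y ∈ N, W t (ξ y)| := by
        rw [singleSiteHam, add_sub_cancel_right]
    _ ≤ ∑ y ∈ N, |W t (ξ y)| := Finset.abs_sum_le_sum_abs _ _
    _ ≤ ∑ y ∈ N, (β / ((G.degree x : ℝ) * G.degree y) * |t| ^ p +
          (β * |ξ y| ^ p / ((G.degree x : ℝ) * G.degree y) +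
            couplingConst IW JW r p β * ((G.degree x : ℝ) * G.degree y) ^ (r / (p - r)) / 2)) :=
        Finset.sum_le_sum fun y hy => abs_le_of_growth_bound (hW t (ξ y)) hIW hJW hr hrp hβ
          (one_le_degree_mul_degree G ((G.mem_neighborFinset x y).mp hy))
    _ ≤ _ := by
        rw [Finset.sum_add_distrib, ← Finset.sum_mul]
        gcongr

end Neighborhood

section SingleSiteKernel

variable {V : Type} [DecidableEq V] (G : SimpleGraph V) [∀ v : V, Fintype (G.neighborSet v)]
  (W : ℝ → ℝ → ℝ) (P : ℝ → ℝ)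

theorem comb_singleton (x : V) (σ : ↥({x} : Finset V) → ℝ) (ξ : V → ℝ) :
    comb {x} σ ξ = Function.update ξ x (σ default) := by
  ext y
  by_cases hy : y = x
  · subst hy
    simp only [comb, Finset.mem_singleton, Function.update_self, dite_true]
    rfl
  · simp [comb, hy]

theorem ham_singleton_update (x : V) (ξ : V → ℝ) (t : ℝ) :
    ham G W P {x} (Function.update ξ x t) = singleSiteHam G W P ξ x t := by
  have hx : x ∉ G.neighborFinset x := by simp
  simp only [ham, singleSiteHam, Finset.sum_singleton, Finset.inter_singleton_of_notMem hx,
    Finset.sdiff_singleton_eq_erase, Finset.erase_eq_of_notMem hx, Finset.sum_empty, zero_div,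
    zero_add, Function.update_self]
  congr 1
  refine Finset.sum_congr rfl fun y hy => ?_
  rw [Function.update_of_ne (ne_of_mem_of_not_mem hy hx)]

theorem ham_comb_singleton (x : V) (σ : ↥({x} : Finset V) → ℝ) (ξ : V → ℝ) :
    ham G W P {x} (comb {x} σ ξ) = singleSiteHam G W P ξ x (σ default) := by
  rw [comb_singleton, ham_singleton_update]

theorem partZ_singleton (x : V) (ξ : V → ℝ) :
    partZ G W P {x} ξ = ∫ t, exp (-singleSiteHam G W P ξ x t) := by
  simp only [partZ, ham_comb_singleton]
  exact (volume_preserving_funUnique ↥({x} : Finset V) ℝ).integral_comp'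
    fun t => exp (-singleSiteHam G W P ξ x t)

theorem lintegral_gibbsKer_singleton {x : V} {ξ : V → ℝ}
    (hU : Measurable (singleSiteHam G W P ξ x)) {f : ℝ → ℝ≥0∞} (hf : Measurable f) :
    ∫⁻ ω, f (ω x) ∂gibbsKer G W P {x} ξ =
      (ENNReal.ofReal (∫ t, exp (-singleSiteHam G W P ξ x t)))⁻¹ *
        ∫⁻ t, ENNReal.ofReal (exp (-singleSiteHam G W P ξ x t)) * f t := by
  have hupdate : Measurable fun σ : ↥({x} : Finset V) → ℝ => Function.update ξ x (σ default) :=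
    (measurable_update ξ).comp (measurable_pi_apply _)
  have hfx : Measurable fun ω : V → ℝ => f (ω x) := hf.comp (measurable_pi_apply x)
  simp only [gibbsKer, comb_singleton, ham_singleton_update, partZ_singleton]
  rw [lintegral_smul_measure, lintegral_map hfx hupdate]
  simp only [Function.update_self, smul_eq_mul]
  rw [lintegral_withDensity_eq_lintegral_mul _ (by fun_prop) (by fun_prop)]
  congr 1
  exact (volume_preserving_funUnique ↥({x} : Finset V) ℝ).lintegral_comp_emb
    (MeasurableEquiv.measurableEmbedding _)
    fun t => ENNReal.ofReal (exp (-singleSiteHam G W P ξ x t)) * f t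

end SingleSiteKernel

/-- **Lemma 1 (one-point moment estimate).** For `β > 0`, `p ∈ [p₀,q)`, `λ > 0`,
`x ∈ V` and `ξ ∈ Ω`:
`∫ exp(λ|ω(x)|^p) π_{{x}}(dω|ξ) ≤ exp( C(β,λ,p) + Σ_{y∼x} 2β|ξ(y)|^p/(n(x)n(y))
  + Σ_{y∼x} Γ_{xy}(β,p) )`,
where `γ(β,p) = I_W + 4(p-r)(J_W/2p)^{p/(p-r)}(r/β)^{r/(p-r)}`,
`Γ_{xy}(β,p) = γ(β,p)[n(x)n(y)]^{r/(p-r)}`, and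
`C(β,λ,p) = c_V + log ∫ exp((λ+β)|u|^p - a_V|u|^q) du - log ∫ exp(-β|u|^p - V(u)) du`. -/
theorem one_point_moment_estimate
    (G : SimpleGraph V) [∀ v : V, Fintype (G.neighborSet v)] (hconn : G.Connected)
    (θ : ℝ) (hθ : 0 < θ)
    (W : ℝ → ℝ → ℝ) (hWcont : Continuous (Function.uncurry W))
    (hWsym : ∀ u v : ℝ, W u v = W v u)
    (IW JW r : ℝ) (hIW : 0 < IW) (hJW : 0 < JW) (hr : 0 < r)
    (hW : ∀ u v : ℝ, |W u v| ≤ (IW + JW * (|u| ^ r + |v| ^ r)) / 2)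
    (P : ℝ → ℝ) (hPcont : Continuous P)
    (aV cV q : ℝ) (haV : 0 < aV) (hcV : 0 < cV) (hq : r + r / θ < q)
    (hP : ∀ u : ℝ, aV * |u| ^ q - cV ≤ P u)
    (lam β p : ℝ) (hlam : 0 < lam) (hβ : 0 < β) (hp : p ∈ Set.Ico (r + r / θ) q)
    (x : V) (ξ : V → ℝ) :
    ∫⁻ ω, ENNReal.ofReal (Real.exp (lam * |ω x| ^ p)) ∂(gibbsKer G W P {x} ξ) ≤
      ENNReal.ofReal (Real.exp
        ((cV + Real.log (∫ u : ℝ, Real.exp ((lam + β) * |u| ^ p - aV * |u| ^ q))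
            - Real.log (∫ u : ℝ, Real.exp (-β * |u| ^ p - P u)))
          + (∑ y ∈ G.neighborFinset x,
              2 * β * |ξ y| ^ p / ((G.degree x : ℝ) * (G.degree y : ℝ)))
          + (∑ y ∈ G.neighborFinset x,
              (IW + 4 * (p - r) * (JW / (2 * p)) ^ (p / (p - r)) * (r / β) ^ (r / (p - r)))
                * ((G.degree x : ℝ) * (G.degree y : ℝ)) ^ (r / (p - r))))) := by
  obtain ⟨hp₀, hpq⟩ := hp
  have hrp : r < p := (lt_add_of_pos_right r (div_pos hr hθ)).trans_le hp₀
  have hU := (continuous_singleSiteHam G W P hWcont hPcont ξ x).measurable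
  have hf : Measurable fun t : ℝ => ENNReal.ofReal (exp (lam * |t| ^ p)) := by fun_prop
  rw [lintegral_gibbsKer_singleton G W P hU hf]
  refine (inv_ofReal_integral_mul_lintegral_le hU hPcont.measurable haV (hr.trans hrp) hpq hP
    (abs_singleSiteHam_sub_le G W P hW hIW.le hJW.le hr hrp hβ ξ x)).trans_eq ?_
  rw [add_assoc _ (Finset.sum _ _), ← Finset.sum_add_distrib, Finset.mul_sum]
  refine congrArg (ENNReal.ofReal ∘ exp) (congrArg _ (Finset.sum_congr rfl fun y _ => ?_))
  rw [couplingConst]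
  ring
end
end

section
/- Compact embedding of weighted sequence spaces. Let 0 < α' ≤ α, 0 < p ≤ p', and suppose Σ_{x∈V} exp(−α' ρ(o,x)) < ∞. Then L^{p'}(V,w_{α'}) ⊆ L^p(V,w_α), and there is a constant C > 0 with ‖ω‖_{p,α} ≤ C‖ω‖_{p',α'} for all ω ∈ L^{p'}(V,w_{α'}). Moreover, if (p',α') ≠ (p,α) (i.e. p' > p or α' < α), the embedding is compact: every set bounded in the norm ‖·‖_{p',α'} is relatively compact in (L^p(V,w_α), ‖·‖_{p,α}). -/
open MeasureTheory Real Filter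

noncomputable section

variable {V : Type} [Countable V]

/-- The norm `‖ω‖_{p,α} = (Σ_x |ω(x)|^p w_α(x))^{1/p}`. -/
def normP (G : SimpleGraph V) (o : V) (p α : ℝ) (ω : V → ℝ) : ℝ :=
  (∑' x : V, |ω x| ^ p * wgt G o α x) ^ (1 / p)

/-!
Splitting at `a = t` gives `a ^ p ≤ t ^ p + t ^ (p - p') * a ^ p'`; multiplied by `w_α ≤ w_α'`
and summed, it gives the inclusion and, for `t = ‖ω‖_{p',α'}`, the norm bound with
`C = (Σ_x w_α(x) + 1) ^ (1/p)`. A `‖·‖_{p',α'}`-bounded sequence is bounded at every vertex,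
so by Tychonoff a subsequence converges pointwise, and by Fatou its limit stays in the ball.
Convergence in `‖·‖_{p,α}` then follows once the tails outside finite sets are uniformly small
on the ball, which is where `(p', α') ≠ (p, α)` enters: if `p < p'` take `t` large and then a
finite set off which `Σ w_α` is small; if `α' < α` take `t` small and use that `w_α / w_α' → 0`
off finite sets.
-/

open Topology

namespace WeightedSeq

lemma rpow_le_rpow_add_rpow_sub_mul {a t p p' : ℝ} (ha : 0 ≤ a) (ht : 0 < t) (hp : 0 ≤ p)
    (hpp : p ≤ p') : a ^ p ≤ t ^ p + t ^ (p - p') * a ^ p' := by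
  rcases le_total a t with hat | hta
  · have := mul_nonneg (rpow_nonneg ht.le (p - p')) (rpow_nonneg ha p')
    linarith [rpow_le_rpow ha hat hp]
  · have ha' : 0 < a := ht.trans_le hta
    calc a ^ p = a ^ (p - p') * a ^ p' := by rw [← rpow_add ha', sub_add_cancel]
      _ ≤ t ^ (p - p') * a ^ p' :=
        mul_le_mul_of_nonneg_right (rpow_le_rpow_of_nonpos ht hta (by linarith)) (rpow_nonneg ha _)
      _ ≤ t ^ p + t ^ (p - p') * a ^ p' := le_add_of_nonneg_left (rpow_nonneg ht.le _)

lemma abs_sub_rpow_le (a b : ℝ) {q : ℝ} (hq : 0 ≤ q) :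
    |a - b| ^ q ≤ 2 ^ q * (|a| ^ q + |b| ^ q) := by
  have hmax : |a - b| ≤ 2 * max |a| |b| := by
    linarith [abs_sub a b, le_max_left |a| |b|, le_max_right |a| |b|]
  have hmax_rpow : max |a| |b| ^ q ≤ |a| ^ q + |b| ^ q := by
    rcases max_choice |a| |b| with h | h <;> rw [h]
    · linarith [rpow_nonneg (abs_nonneg b) q]
    · linarith [rpow_nonneg (abs_nonneg a) q]
  calc |a - b| ^ q ≤ (2 * max |a| |b|) ^ q := rpow_le_rpow (abs_nonneg _) hmax hq
    _ = 2 ^ q * max |a| |b| ^ q := mul_rpow zero_le_two (le_max_of_le_left (abs_nonneg a))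
    _ ≤ 2 ^ q * (|a| ^ q + |b| ^ q) := by gcongr

section Summation

variable {ι : Type*}

lemma summable_and_tsum_le_of_tendsto {α : Type*} {l : Filter α} [l.NeBot] {f : α → ι → ℝ}
    {g : ι → ℝ} {T : ℝ} (hf0 : ∀ n x, 0 ≤ f n x) (hf : ∀ n, Summable (f n))
    (hT : ∀ n, ∑' x, f n x ≤ T) (hlim : ∀ x, Tendsto (fun n => f n x) l (𝓝 (g x))) :
    Summable g ∧ ∑' x, g x ≤ T := by
  have hg0 : 0 ≤ g := fun x => ge_of_tendsto (hlim x) (Eventually.of_forall fun n => hf0 n x)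
  have hfin : ∀ F : Finset ι, ∑ x ∈ F, g x ≤ T := fun F =>
    le_of_tendsto (tendsto_finsetSum F fun x _ => hlim x) (Eventually.of_forall fun n =>
      ((hf n).sum_le_tsum F fun x _ => hf0 n x).trans (hT n))
  exact ⟨summable_of_sum_le hg0 hfin, Real.tsum_le_of_sum_le hg0 hfin⟩

lemma tendsto_tsum_zero_of_tsum_compl_le {α : Type*} {l : Filter α} {f : α → ι → ℝ}
    (hf0 : ∀ n x, 0 ≤ f n x) (hf : ∀ n, Summable (f n))
    (hlim : ∀ x, Tendsto (fun n => f n x) l (𝓝 0))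
    (htail : ∀ ε > 0, ∃ F : Finset ι, ∀ n, ∑' x : {x // x ∉ F}, f n x ≤ ε) :
    Tendsto (fun n => ∑' x, f n x) l (𝓝 0) := by
  refine tendsto_order.2 ⟨fun a ha => Eventually.of_forall fun n =>
    ha.trans_le (tsum_nonneg (hf0 n)), fun ε hε => ?_⟩
  obtain ⟨F, hF⟩ := htail (ε / 2) (half_pos hε)
  have hfin : Tendsto (fun n => ∑ x ∈ F, f n x) l (𝓝 0) := by
    simpa using tendsto_finsetSum F fun x _ => hlim x
  filter_upwards [hfin.eventually (gt_mem_nhds (half_pos hε))] with n hn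
  rw [← (hf n).sum_add_tsum_subtype_compl F]
  linarith [hF n]

lemma exists_subseq_tendsto_of_abs_le [Countable ι] {u : ℕ → ι → ℝ} {M : ι → ℝ}
    (hu : ∀ n x, |u n x| ≤ M x) :
    ∃ ω : ι → ℝ, ∃ φ : ℕ → ℕ, StrictMono φ ∧ ∀ x, Tendsto (fun n => u (φ n) x) atTop (𝓝 (ω x)) := by
  have hK : IsCompact (Set.univ.pi fun x => Set.Icc (-M x) (M x)) :=
    isCompact_univ_pi fun x => isCompact_Icc
  obtain ⟨ω, -, φ, hφ, hlim⟩ :=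
    hK.tendsto_subseq (x := u) fun n => Set.mem_univ_pi.2 fun x => abs_le.1 (hu n x)
  exact ⟨ω, φ, hφ, tendsto_pi_nhds.1 hlim⟩

end Summation

section Weighted

variable {ι : Type*} {w w' : ι → ℝ} {p p' : ℝ}

lemma summable_rpow_mul_and_tsum_le {c t : ℝ} (hw0 : ∀ x, 0 ≤ w x) (hw : Summable w)
    (hc : ∀ x, w x ≤ c * w' x) (ht : 0 < t) (hp : 0 ≤ p) (hpp : p ≤ p') {v : ι → ℝ}
    (hv : Summable fun x => |v x| ^ p' * w' x) :
    Summable (fun x => |v x| ^ p * w x) ∧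
      ∑' x, |v x| ^ p * w x ≤ t ^ p * ∑' x, w x + t ^ (p - p') * c * ∑' x, |v x| ^ p' * w' x := by
  have hpt : ∀ x, |v x| ^ p * w x ≤ t ^ p * w x + t ^ (p - p') * c * (|v x| ^ p' * w' x) := by
    intro x
    have hcoef : 0 ≤ t ^ (p - p') * |v x| ^ p' :=
      mul_nonneg (rpow_nonneg ht.le _) (rpow_nonneg (abs_nonneg _) _)
    calc |v x| ^ p * w x ≤ (t ^ p + t ^ (p - p') * |v x| ^ p') * w x :=
          mul_le_mul_of_nonneg_right
            (rpow_le_rpow_add_rpow_sub_mul (abs_nonneg _) ht hp hpp) (hw0 x)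
      _ ≤ t ^ p * w x + t ^ (p - p') * |v x| ^ p' * (c * w' x) := by
          rw [add_mul]; gcongr; exact hc x
      _ = t ^ p * w x + t ^ (p - p') * c * (|v x| ^ p' * w' x) := by ring
  have hdom : Summable fun x => t ^ p * w x + t ^ (p - p') * c * (|v x| ^ p' * w' x) :=
    (hw.mul_left _).add (hv.mul_left _)
  have hsum : Summable fun x => |v x| ^ p * w x :=
    hdom.of_nonneg_of_le (fun x => mul_nonneg (rpow_nonneg (abs_nonneg _) _) (hw0 x)) hpt
  refine ⟨hsum, ?_⟩
  calc ∑' x, |v x| ^ p * w x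
      ≤ ∑' x, (t ^ p * w x + t ^ (p - p') * c * (|v x| ^ p' * w' x)) := hsum.tsum_le_tsum hpt hdom
    _ = t ^ p * ∑' x, w x + t ^ (p - p') * c * ∑' x, |v x| ^ p' * w' x := by
      rw [(hw.mul_left _).tsum_add (hv.mul_left _), tsum_mul_left, tsum_mul_left]

lemma summable_rpow_mul_of_le (hw0 : ∀ x, 0 ≤ w x) (hww' : ∀ x, w x ≤ w' x) (hw' : Summable w')
    (hp : 0 ≤ p) (hpp : p ≤ p') {v : ι → ℝ} (hv : Summable fun x => |v x| ^ p' * w' x) :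
    Summable fun x => |v x| ^ p * w x :=
  (summable_rpow_mul_and_tsum_le hw0 (hw'.of_nonneg_of_le hw0 hww') (c := 1)
    (fun x => (one_mul (w' x)).symm ▸ hww' x) one_pos hp hpp hv).1

lemma rpow_tsum_rpow_mul_le (hw0 : ∀ x, 0 ≤ w x) (hww' : ∀ x, w x ≤ w' x)
    (hw'0 : ∀ x, 0 < w' x) (hw' : Summable w') (hp : 0 < p) (hpp : p ≤ p') {v : ι → ℝ}
    (hv : Summable fun x => |v x| ^ p' * w' x) :
    (∑' x, |v x| ^ p * w x) ^ (1 / p) ≤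
      (∑' x, w x + 1) ^ (1 / p) * (∑' x, |v x| ^ p' * w' x) ^ (1 / p') := by
  have hp' : 0 < p' := hp.trans_le hpp
  have hw : Summable w := hw'.of_nonneg_of_le hw0 hww'
  have hA : 0 ≤ ∑' x, w x := tsum_nonneg hw0
  have hterm0 : ∀ x, 0 ≤ |v x| ^ p' * w' x :=
    fun x => mul_nonneg (rpow_nonneg (abs_nonneg _) _) (hw'0 x).le
  set S' := ∑' x, |v x| ^ p' * w' x
  have hS'0 : 0 ≤ S' := tsum_nonneg hterm0
  rcases hS'0.eq_or_lt with hzero | hpos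
  · have hv0 : ∀ x, v x = 0 := by
      intro x
      have hsum0 : HasSum (fun x => |v x| ^ p' * w' x) 0 := hzero ▸ hv.hasSum
      have hx := congrFun ((hasSum_zero_iff_of_nonneg hterm0).1 hsum0) x
      simpa [(hw'0 x).ne', hp'.ne'] using hx
    simp only [hv0, abs_zero, zero_rpow hp.ne', zero_mul, tsum_zero,
      zero_rpow (one_div_ne_zero hp.ne')]
    exact mul_nonneg (rpow_nonneg (by linarith) _) (rpow_nonneg hS'0 _)
  · set t := S' ^ (1 / p')
    have ht : 0 < t := rpow_pos_of_pos hpos _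
    have hS' : S' = t ^ p' := by rw [← rpow_mul hpos.le, one_div_mul_cancel hp'.ne', rpow_one]
    have hle : ∑' x, |v x| ^ p * w x ≤ t ^ p * ∑' x, w x + t ^ (p - p') * 1 * S' :=
      (summable_rpow_mul_and_tsum_le hw0 hw (c := 1)
      (fun x => (one_mul (w' x)).symm ▸ hww' x) ht hp.le hpp hv).2
    have hbound : ∑' x, |v x| ^ p * w x ≤ (∑' x, w x + 1) * t ^ p := by
      rwa [hS', mul_one, ← rpow_add ht, sub_add_cancel, mul_comm, ← add_one_mul] at hle
    calc (∑' x, |v x| ^ p * w x) ^ (1 / p) ≤ ((∑' x, w x + 1) * t ^ p) ^ (1 / p) :=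
          rpow_le_rpow (tsum_nonneg fun x => mul_nonneg (rpow_nonneg (abs_nonneg _) _) (hw0 x))
            hbound (by positivity)
      _ = (∑' x, w x + 1) ^ (1 / p) * t := by
          rw [mul_rpow (by linarith) (rpow_nonneg ht.le _), ← rpow_mul ht.le,
            mul_one_div_cancel hp.ne', rpow_one]

lemma summable_abs_sub_rpow_mul_and_tsum_le (hw0 : ∀ x, 0 ≤ w x) (hp : 0 ≤ p) {a b : ι → ℝ}
    (ha : Summable fun x => |a x| ^ p * w x) (hb : Summable fun x => |b x| ^ p * w x) :
    Summable (fun x => |a x - b x| ^ p * w x) ∧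
      ∑' x, |a x - b x| ^ p * w x ≤ 2 ^ p * (∑' x, |a x| ^ p * w x + ∑' x, |b x| ^ p * w x) := by
  have hpt : ∀ x, |a x - b x| ^ p * w x ≤ 2 ^ p * (|a x| ^ p * w x + |b x| ^ p * w x) := by
    intro x
    rw [← add_mul, ← mul_assoc]
    exact mul_le_mul_of_nonneg_right (abs_sub_rpow_le _ _ hp) (hw0 x)
  have hdom := (ha.add hb).mul_left (2 ^ p)
  have hsum : Summable fun x => |a x - b x| ^ p * w x :=
    hdom.of_nonneg_of_le (fun x => mul_nonneg (rpow_nonneg (abs_nonneg _) _) (hw0 x)) hpt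
  refine ⟨hsum, (hsum.tsum_le_tsum hpt hdom).trans_eq ?_⟩
  rw [tsum_mul_left, ha.tsum_add hb]

lemma abs_le_rpow_of_tsum_rpow_mul_le (hw0 : ∀ x, 0 ≤ w x) (hp : 0 < p) {v : ι → ℝ} {T : ℝ}
    (hv : Summable fun x => |v x| ^ p * w x) (hvT : ∑' x, |v x| ^ p * w x ≤ T) {x : ι}
    (hwx : 0 < w x) : |v x| ≤ (T / w x) ^ p⁻¹ := by
  have hx : |v x| ^ p * w x ≤ T :=
    (hv.le_tsum x fun y _ => mul_nonneg (rpow_nonneg (abs_nonneg _) _) (hw0 y)).trans hvT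
  have hT : 0 ≤ T / w x :=
    div_nonneg ((mul_nonneg (rpow_nonneg (abs_nonneg _) _) (hw0 x)).trans hx) hwx.le
  exact (le_rpow_inv_iff_of_pos (abs_nonneg _) hT hp).2 ((le_div_iff₀ hwx).2 hx)

lemma tsum_compl_rpow_mul_le (hw0 : ∀ x, 0 ≤ w x) (hw : Summable w) (hw'0 : ∀ x, 0 ≤ w' x)
    (hp : 0 ≤ p) (hpp : p ≤ p') (F : Finset ι) {c t T : ℝ} (hc : 0 ≤ c) (ht : 0 < t)
    (hF : ∀ x ∉ F, w x ≤ c * w' x) {v : ι → ℝ} (hv : Summable fun x => |v x| ^ p' * w' x)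
    (hvT : ∑' x, |v x| ^ p' * w' x ≤ T) :
    ∑' x : {x // x ∉ F}, |v x| ^ p * w x ≤
      t ^ p * ∑' x : {x // x ∉ F}, w x + t ^ (p - p') * c * T := by
  refine (summable_rpow_mul_and_tsum_le (w := fun x : {x // x ∉ F} => w x) (w' := fun x => w' x)
    (fun x => hw0 x) (hw.subtype _) (fun x => hF x x.2) ht hp hpp (hv.subtype _)).2.trans ?_
  gcongr
  refine (Summable.tsum_subtype_le _ {x | x ∉ F} (fun x => ?_) hv).trans hvT
  exact mul_nonneg (rpow_nonneg (abs_nonneg _) _) (hw'0 x)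

lemma exists_finset_tsum_compl_rpow_mul_le (hw0 : ∀ x, 0 ≤ w x) (hww' : ∀ x, w x ≤ w' x)
    (hw'0 : ∀ x, 0 < w' x) (hw' : Summable w') (hp : 0 < p) (hpp : p ≤ p')
    (hstrict : p < p' ∨ Tendsto (fun x => w x / w' x) cofinite (𝓝 0)) (T : ℝ) {ε : ℝ}
    (hε : 0 < ε) :
    ∃ F : Finset ι, ∀ v : ι → ℝ, Summable (fun x => |v x| ^ p' * w' x) →
      ∑' x, |v x| ^ p' * w' x ≤ T → ∑' x : {x // x ∉ F}, |v x| ^ p * w x ≤ ε := by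
  have hw : Summable w := hw'.of_nonneg_of_le hw0 hww'
  have hw'0' : ∀ x, 0 ≤ w' x := fun x => (hw'0 x).le
  rcases hstrict with hlt | hratio
  · have hdecay : Tendsto (fun t : ℝ => t ^ (p - p') * 1 * T) atTop (𝓝 0) := by
      simpa [neg_sub] using (tendsto_rpow_neg_atTop (sub_pos.2 hlt)).mul_const T
    obtain ⟨t, htε, ht⟩ :=
      ((hdecay.eventually (ge_mem_nhds (half_pos hε))).and (eventually_gt_atTop 0)).exists
    have hsmall : Tendsto (fun F : Finset ι => t ^ p * ∑' x : {x // x ∉ F}, w x) atTop (𝓝 0) := by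
      simpa using (tendsto_tsum_compl_atTop_zero w).const_mul (t ^ p)
    obtain ⟨F, hF⟩ := (hsmall.eventually (ge_mem_nhds (half_pos hε))).exists
    refine ⟨F, fun v hv hvT => ?_⟩
    have := tsum_compl_rpow_mul_le hw0 hw hw'0' hp.le hpp F zero_le_one ht
      (fun x _ => (one_mul (w' x)).symm ▸ hww' x) hv hvT
    linarith
  · have hsmall : Tendsto (fun t : ℝ => t ^ p * ∑' x, w x) (𝓝[>] 0) (𝓝 0) := by
      simpa [zero_rpow hp.ne'] using ((continuousAt_rpow_const 0 p (Or.inr hp.le)).tendsto.mul_const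
        (∑' x, w x)).mono_left nhdsWithin_le_nhds
    obtain ⟨t, htε, ht⟩ :=
      ((hsmall.eventually (ge_mem_nhds (half_pos hε))).and self_mem_nhdsWithin).exists
    have hdecay : Tendsto (fun c : ℝ => t ^ (p - p') * c * T) (𝓝[>] 0) (𝓝 0) := by
      simpa using ((Continuous.tendsto (f := fun c : ℝ => t ^ (p - p') * c * T) (by fun_prop)
        0).mono_left nhdsWithin_le_nhds)
    obtain ⟨c, hcε, hc⟩ :=
      ((hdecay.eventually (ge_mem_nhds (half_pos hε))).and self_mem_nhdsWithin).exists
    have hfin : {x | ¬w x / w' x ≤ c}.Finite :=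
      eventually_cofinite.1 (hratio.eventually (ge_mem_nhds hc))
    refine ⟨hfin.toFinset, fun v hv hvT => ?_⟩
    have hF : ∀ x ∉ hfin.toFinset, w x ≤ c * w' x := fun x hx =>
      (div_le_iff₀ (hw'0 x)).1 (by simpa using hx)
    have hsub : t ^ p * ∑' x : {x // x ∉ hfin.toFinset}, w x ≤ t ^ p * ∑' x, w x :=
      mul_le_mul_of_nonneg_left (Summable.tsum_subtype_le _ _ hw0 hw) (rpow_nonneg ht.le _)
    have := tsum_compl_rpow_mul_le hw0 hw hw'0' hp.le hpp _ hc.le ht hF hv hvT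
    linarith

theorem exists_subseq_tendsto_tsum_abs_sub_rpow_mul [Countable ι] (hw0 : ∀ x, 0 ≤ w x)
    (hww' : ∀ x, w x ≤ w' x) (hw'0 : ∀ x, 0 < w' x) (hw' : Summable w') (hp : 0 < p)
    (hpp : p ≤ p') (hstrict : p < p' ∨ Tendsto (fun x => w x / w' x) cofinite (𝓝 0))
    {u : ℕ → ι → ℝ} {T : ℝ} (hu : ∀ n, Summable fun x => |u n x| ^ p' * w' x)
    (huT : ∀ n, ∑' x, |u n x| ^ p' * w' x ≤ T) :
    ∃ ω : ι → ℝ, Summable (fun x => |ω x| ^ p' * w' x) ∧ ∃ φ : ℕ → ℕ, StrictMono φ ∧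
      Tendsto (fun n => ∑' x, |u (φ n) x - ω x| ^ p * w x) atTop (𝓝 0) := by
  have hp' : 0 < p' := hp.trans_le hpp
  have hw'0' : ∀ x, 0 ≤ w' x := fun x => (hw'0 x).le
  obtain ⟨ω, φ, hφ, hlim⟩ := exists_subseq_tendsto_of_abs_le fun n x =>
    abs_le_rpow_of_tsum_rpow_mul_le hw'0' hp' (hu n) (huT n) (x := x) (hw'0 x)
  obtain ⟨hω, hωT⟩ := summable_and_tsum_le_of_tendsto (f := fun n x => |u (φ n) x| ^ p' * w' x)
    (fun n x => mul_nonneg (rpow_nonneg (abs_nonneg _) _) (hw'0' x)) (fun n => hu (φ n))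
    (fun n => huT (φ n)) fun x =>
      ((continuousAt_rpow_const _ _ (Or.inr hp'.le)).tendsto.comp (hlim x).abs).mul_const _
  refine ⟨ω, hω, φ, hφ, ?_⟩
  have hdiff := fun n => summable_abs_sub_rpow_mul_and_tsum_le hw'0' hp'.le (hu (φ n)) hω
  refine tendsto_tsum_zero_of_tsum_compl_le
    (fun n x => mul_nonneg (rpow_nonneg (abs_nonneg _) _) (hw0 x))
    (fun n => summable_rpow_mul_of_le hw0 hww' hw' hp.le hpp (hdiff n).1) (fun x => ?_)
    (fun ε hε => ?_)
  · simpa [zero_rpow hp.ne'] using ((continuousAt_rpow_const _ p (Or.inr hp.le)).tendsto.comp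
      ((hlim x).sub_const (ω x)).abs).mul_const (w x)
  · obtain ⟨F, hF⟩ := exists_finset_tsum_compl_rpow_mul_le hw0 hww' hw'0 hw' hp hpp hstrict
      (2 ^ p' * (T + T)) hε
    exact ⟨F, fun n => hF _ (hdiff n).1 ((hdiff n).2.trans (by gcongr; exact huT _))⟩

end Weighted

section Graph

variable {X : Type} (G : SimpleGraph X) (o : X)

lemma wgt_pos (α : ℝ) (x : X) : 0 < wgt G o α x := exp_pos _

lemma wgt_le_wgt {α' α : ℝ} (h : α' ≤ α) (x : X) : wgt G o α x ≤ wgt G o α' x :=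
  exp_le_exp.2 (by nlinarith [(G.dist o x).cast_nonneg (α := ℝ)])

lemma tendsto_wgt_div_wgt_cofinite {α' α : ℝ} (hα' : 0 < α') (hαα : α' < α)
    (hsum : Summable (wgt G o α')) :
    Tendsto (fun x => wgt G o α x / wgt G o α' x) cofinite (𝓝 0) := by
  have hr : 0 < (α - α') / α' := div_pos (sub_pos.2 hαα) hα'
  have hratio : ∀ x, wgt G o α x / wgt G o α' x = wgt G o α' x ^ ((α - α') / α') := by
    intro x
    rw [wgt, wgt, ← exp_sub, ← exp_mul]
    congr 1
    field_simp
    ring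
  simpa [Function.comp_def, hratio, zero_rpow hr.ne'] using
    (continuousAt_rpow_const 0 _ (Or.inr hr.le)).tendsto.comp hsum.tendsto_cofinite_zero

end Graph

end WeightedSeq

open WeightedSeq

theorem compact_embedding_weighted_sequence_spaces_general
    (G : SimpleGraph V) (o : V)
    (α' α p p' : ℝ) (hα' : 0 < α') (hαα : α' ≤ α) (hp : 0 < p) (hpp : p ≤ p')
    (hsum : Summable fun x : V => Real.exp (-α' * (G.dist o x : ℝ))) :
    (tempered G o p' α' ⊆ tempered G o p α) ∧
    (∃ C : ℝ, 0 < C ∧ ∀ ω ∈ tempered G o p' α',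
      normP G o p α ω ≤ C * normP G o p' α' ω) ∧
    ((p < p' ∨ α' < α) → ∀ S : Set (V → ℝ), S ⊆ tempered G o p' α' →
      (∃ R : ℝ, ∀ ω ∈ S, normP G o p' α' ω ≤ R) →
      ∀ u : ℕ → (V → ℝ), (∀ n, u n ∈ S) →
        ∃ ω ∈ tempered G o p α, ∃ φ : ℕ → ℕ, StrictMono φ ∧
          Filter.Tendsto (fun n => normP G o p α (u (φ n) - ω)) Filter.atTop (nhds 0)) := by
  have hp' : 0 < p' := hp.trans_le hpp
  have hw0 : ∀ x, 0 ≤ wgt G o α x := fun x => (wgt_pos G o α x).le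
  have hww' := wgt_le_wgt G o hαα
  have hw'0 := wgt_pos G o α'
  have hw' : Summable (wgt G o α') := hsum
  refine ⟨fun ω hω => summable_rpow_mul_of_le hw0 hww' hw' hp.le hpp hω,
    ⟨_, rpow_pos_of_pos (add_pos_of_nonneg_of_pos (tsum_nonneg hw0) one_pos) _,
      fun ω hω => rpow_tsum_rpow_mul_le hw0 hww' hw'0 hw' hp hpp hω⟩, ?_⟩
  rintro hstrict S hS ⟨R, hR⟩ u hu
  have huR : ∀ n, ∑' x, |u n x| ^ p' * wgt G o α' x ≤ R ^ p' := by
    intro n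
    have hS0 : 0 ≤ ∑' x, |u n x| ^ p' * wgt G o α' x :=
      tsum_nonneg fun x => mul_nonneg (rpow_nonneg (abs_nonneg _) _) (hw'0 x).le
    have hn : (∑' x, |u n x| ^ p' * wgt G o α' x) ^ p'⁻¹ ≤ R := by
      simpa [normP] using hR _ (hu n)
    exact (rpow_inv_le_iff_of_pos hS0 ((rpow_nonneg hS0 _).trans hn) hp').1 hn
  obtain ⟨ω, hω, φ, hφ, hlim⟩ := exists_subseq_tendsto_tsum_abs_sub_rpow_mul hw0 hww' hw'0 hw' hp
    hpp (hstrict.imp_right fun h => tendsto_wgt_div_wgt_cofinite G o hα' h hw')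
    (fun n => hS (hu n)) huR
  refine ⟨ω, summable_rpow_mul_of_le hw0 hww' hw' hp.le hpp hω, φ, hφ, ?_⟩
  simpa [Function.comp_def, normP, zero_rpow (inv_ne_zero hp.ne')] using
    (continuousAt_rpow_const 0 (1 / p) (Or.inr (by positivity))).tendsto.comp hlim

/-- **Compact embedding of weighted sequence spaces.** Let `0 < α' ≤ α`, `0 < p ≤ p'`,
and `Σ_x exp(-α' ρ(o,x)) < ∞`. Then `L^{p'}(V,w_{α'}) ⊆ L^p(V,w_α)` and there is `C > 0`
with `‖ω‖_{p,α} ≤ C ‖ω‖_{p',α'}` on `L^{p'}(V,w_{α'})`. Moreover, if `p' > p` or `α' < α`,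
the embedding is compact: every `‖·‖_{p',α'}`-bounded set is relatively compact in the
norm `‖·‖_{p,α}` (every sequence in it has a subsequence converging in `‖·‖_{p,α}` to
some element of `L^p(V,w_α)`). -/
theorem compact_embedding_weighted_sequence_spaces
    (G : SimpleGraph V) (hconn : G.Connected) (o : V)
    (α' α p p' : ℝ) (hα' : 0 < α') (hαα : α' ≤ α) (hp : 0 < p) (hpp : p ≤ p')
    (hsum : Summable fun x : V => Real.exp (-α' * (G.dist o x : ℝ))) :
    (tempered G o p' α' ⊆ tempered G o p α) ∧
    (∃ C : ℝ, 0 < C ∧ ∀ ω ∈ tempered G o p' α',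
      normP G o p α ω ≤ C * normP G o p' α' ω) ∧
    ((p < p' ∨ α' < α) → ∀ S : Set (V → ℝ), S ⊆ tempered G o p' α' →
      (∃ R : ℝ, ∀ ω ∈ S, normP G o p' α' ω ≤ R) →
      ∀ u : ℕ → (V → ℝ), (∀ n, u n ∈ S) →
        ∃ ω ∈ tempered G o p α, ∃ φ : ℕ → ℕ, StrictMono φ ∧
          Filter.Tendsto (fun n => normP G o p α (u (φ n) - ω)) Filter.atTop (nhds 0)) :=
  compact_embedding_weighted_sequence_spaces_general G o α' α p p' hα' hαα hp hpp hsum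
end
end

section
/- Theorem 5 (summability for repulsive graphs). Let n_* > 2 be an integer, υ, ε > 0, and φ(b) = υ log b (log log b)^{1+ε} for b ≥ n_* + 1, with φ(n_* + 1) > 1. Let G ∈ 𝔾(n_*, φ). Then for any θ > 0 there exists α₀ ≥ 0 (depending only on θ, n_*, υ, ε) such that Θ(α,θ) < ∞ for every α > α₀ and every choice of the root o ∈ V. -/
/-!
Along a path, two vertices of degree `> n_*` are at least `φ(max degree)` steps apart, and
`log b ≤ A φ(b)` for `b > n_*` with `A = log(n_*+1)/φ(n_*+1)`; so the high degrees on a path of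
length `r` contribute at most `A r` plus the logarithm of the last of them to the sum of
log-degrees. Since `φ(b)/log b → ∞`, repulsion from one fixed high-degree vertex gives
`log n(x) ≤ δ ρ(o,x) + C` for every `δ > 0`. Hence the degrees along a geodesic of length `r`
multiply to at most `exp((α₀ + δ) r + C)` with `α₀ = log n_* + A`. The simple random walk
from `o` follows a given geodesic with probability the inverse of that product, so the sphere of
radius `r` has at most `exp((α₀ + δ) r + C)` vertices, each contributing `exp(O(δ) r - α r)`
to `Θ(α,θ)`.
-/

open Real

noncomputable section

/-- The repulsion function `φ(b) = υ log b (log log b)^{1+ε}`. -/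
def phiRep (υ ε b : ℝ) : ℝ := υ * Real.log b * Real.log (Real.log b) ^ (1 + ε)

/-- `G` belongs to the class `𝔾(n_*, φ)`: any two distinct vertices whose degrees both
exceed `n_*` are at path distance at least `φ(max{n(x),n(y)})`. -/
def RepulsiveGraph {V : Type} (G : SimpleGraph V) [∀ v : V, Fintype (G.neighborSet v)]
    (nstar : ℕ) (φ : ℝ → ℝ) : Prop :=
  ∀ x y : V, x ≠ y → nstar < G.degree x → nstar < G.degree y →
    φ (max (G.degree x : ℝ) (G.degree y : ℝ)) ≤ (G.dist x y : ℝ)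

open Finset

theorem Finset.sum_le_of_le_mul_gap (s : Finset ℕ) (g : ℕ → ℝ) {c b : ℝ} (hc : 0 ≤ c)
    (hb : 0 ≤ b) (hgap : ∀ k ∈ s, ∀ l ∈ s, k < l → g k ≤ c * (l - k))
    (hle : ∀ k ∈ s, c * k + g k ≤ b) :
    ∑ k ∈ s, g k ≤ b := by
  induction s using Finset.induction_on_max generalizing b with
  | empty => simpa using hb
  | insert a s hlt ih =>
    have hsum : ∑ k ∈ s, g k ≤ c * a :=
      ih (by positivity) (fun k hk l hl => hgap k (mem_insert_of_mem hk) l (mem_insert_of_mem hl))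
        fun k hk => by linarith [hgap k (mem_insert_of_mem hk) a (mem_insert_self a s) (hlt k hk)]
    rw [sum_insert fun ha => lt_irrefl a (hlt a ha)]
    linarith [hle a (mem_insert_self a s)]

theorem log_natCast_le_log_natCast {m n : ℕ} (h : m ≤ n) : log m ≤ log n := by
  rcases m.eq_zero_or_pos with rfl | hm
  · simpa using log_natCast_nonneg n
  · exact log_le_log (by exact_mod_cast hm) (by exact_mod_cast h)

theorem exp_one_lt_natCast {n : ℕ} (hn : 3 ≤ n) : exp 1 < n :=
  exp_one_lt_three.trans_le (by exact_mod_cast hn)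

theorem exp_one_lt_natCast_add_one {n : ℕ} (hn : 2 ≤ n) : exp 1 < (n : ℝ) + 1 := by
  exact_mod_cast exp_one_lt_natCast (n := n + 1) (by omega)

section phiRep

variable {υ ε : ℝ}

theorem one_lt_log_of_exp_one_lt {a : ℝ} (ha : exp 1 < a) : 1 < log a :=
  (lt_log_iff_exp_lt ((exp_pos 1).trans ha)).mpr ha

theorem phiRep_pos (hυ : 0 < υ) {a : ℝ} (ha : exp 1 < a) : 0 < phiRep υ ε a := by
  have hlog := one_lt_log_of_exp_one_lt ha
  have := rpow_pos_of_pos (log_pos hlog) (1 + ε)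
  unfold phiRep
  positivity

theorem log_div_phiRep_nonneg (hυ : 0 < υ) {a : ℝ} (ha : exp 1 < a) :
    0 ≤ log a / phiRep υ ε a :=
  div_nonneg (zero_le_one.trans (one_lt_log_of_exp_one_lt ha).le) (phiRep_pos hυ ha).le

def growthExponent (nstar : ℕ) (υ ε : ℝ) : ℝ :=
  log nstar + log ((nstar : ℝ) + 1) / phiRep υ ε ((nstar : ℝ) + 1)

theorem growthExponent_nonneg {nstar : ℕ} (hn : 2 ≤ nstar) (hυ : 0 < υ) :
    0 ≤ growthExponent nstar υ ε :=
  add_nonneg (log_natCast_nonneg _) (log_div_phiRep_nonneg hυ (exp_one_lt_natCast_add_one hn))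

theorem log_le_div_mul_phiRep (hυ : 0 < υ) (hε : 0 ≤ 1 + ε) {a b : ℝ} (ha : exp 1 < a)
    (hab : a ≤ b) : log b ≤ log a / phiRep υ ε a * phiRep υ ε b := by
  have hloga := one_lt_log_of_exp_one_lt ha
  have hlog : log a ≤ log b := log_le_log ((exp_pos 1).trans ha) hab
  have hloglog : 0 < log (log a) := log_pos hloga
  have hpow : log (log a) ^ (1 + ε) ≤ log (log b) ^ (1 + ε) :=
    rpow_le_rpow hloglog.le (log_le_log (by linarith) hlog) hε
  have hpos : 0 < log (log a) ^ (1 + ε) := rpow_pos_of_pos hloglog _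
  calc log b ≤ log b * (log (log b) ^ (1 + ε) / log (log a) ^ (1 + ε)) :=
        le_mul_of_one_le_right (by linarith) ((one_le_div hpos).mpr hpow)
    _ = log a / phiRep υ ε a * phiRep υ ε b := by
        unfold phiRep
        field_simp

theorem exists_log_le_mul_phiRep_add (hυ : 0 < υ) (hε : 0 < 1 + ε) {δ : ℝ} (hδ : 0 < δ) :
    ∃ B, ∀ b, exp 1 < b → log b ≤ δ * phiRep υ ε b + B := by
  refine ⟨exp ((υ * δ)⁻¹ ^ (1 + ε)⁻¹), fun b hb => ?_⟩
  have hloglog : 0 < log (log b) := log_pos (one_lt_log_of_exp_one_lt hb)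
  rcases le_or_gt (υ * δ)⁻¹ (log (log b) ^ (1 + ε)) with hlarge | hsmall
  · have := one_lt_log_of_exp_one_lt hb
    have key : 1 ≤ υ * δ * log (log b) ^ (1 + ε) := by
      rw [inv_le_iff_one_le_mul₀ (by positivity)] at hlarge
      linarith
    have : log b ≤ δ * phiRep υ ε b := by
      unfold phiRep
      nlinarith
    linarith [exp_pos ((υ * δ)⁻¹ ^ (1 + ε)⁻¹)]
  · have hsmall' : log (log b) < (υ * δ)⁻¹ ^ (1 + ε)⁻¹ :=
      (lt_rpow_inv_iff_of_pos hloglog.le (by positivity) hε).mpr hsmall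
    have : log b < exp ((υ * δ)⁻¹ ^ (1 + ε)⁻¹) := by
      rwa [← exp_lt_exp, exp_log (by linarith [one_lt_log_of_exp_one_lt hb])] at hsmall'
    linarith [mul_nonneg hδ.le (phiRep_pos (ε := ε) hυ hb).le]

end phiRep

theorem summable_of_sum_le_on_fibers {ι : Type*} {f : ι → ℝ} (hf : 0 ≤ f) (ℓ : ι → ℕ)
    {a : ℕ → ℝ} (ha : Summable a)
    (h : ∀ (t : Finset ι) (r : ℕ), (∀ x ∈ t, ℓ x = r) → ∑ x ∈ t, f x ≤ a r) :
    Summable f := by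
  classical
  have ha0 (r : ℕ) : 0 ≤ a r := by simpa using h ∅ r (by simp)
  refine summable_of_sum_le (c := ∑' r, a r) hf fun u => ?_
  calc ∑ x ∈ u, f x = ∑ r ∈ u.image ℓ, ∑ x ∈ u with ℓ x = r, f x :=
        (sum_fiberwise_of_maps_to (fun x hx => mem_image_of_mem ℓ hx) f).symm
    _ ≤ ∑ r ∈ u.image ℓ, a r := sum_le_sum fun r _ => h _ r fun x hx => (mem_filter.mp hx).2
    _ ≤ ∑' r, a r := ha.sum_le_tsum _ fun r _ => ha0 r

namespace SimpleGraph

theorem Walk.dist_getVert_le {V : Type} {G : SimpleGraph V} {u v : V} (w : G.Walk u v)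
    {k l : ℕ} (hkl : k ≤ l) : G.dist (w.getVert k) (w.getVert l) ≤ l - k := by
  have h := SimpleGraph.dist_le ((w.drop k).take (l - k))
  rw [take_length, w.drop_getVert, Nat.add_sub_cancel' hkl] at h
  exact h.trans inf_le_left

variable {V : Type} (G : SimpleGraph V) [∀ v, Fintype (G.neighborSet v)]

/-- The probability that the simple random walk started at `o` is at `u` at time `r` (the walk
is killed when it has to leave an isolated vertex). -/
def walkProb : ℕ → V → V → ℝ
  | 0, o, u => open Classical in if o = u then 1 else 0
  | r + 1, o, u => ∑ x ∈ G.neighborFinset o, walkProb r x u / G.degree o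

theorem walkProb_nonneg (r : ℕ) (o u : V) : 0 ≤ G.walkProb r o u := by
  induction r generalizing o with
  | zero => unfold walkProb; split_ifs <;> norm_num
  | succ r ih => exact sum_nonneg fun x _ => div_nonneg (ih x) (Nat.cast_nonneg _)

theorem sum_walkProb_le_one (t : Finset V) (r : ℕ) (o : V) :
    ∑ u ∈ t, G.walkProb r o u ≤ 1 := by
  classical
  induction r generalizing o with
  | zero =>
    simp only [walkProb]
    rw [sum_ite_eq]
    split_ifs <;> norm_num
  | succ r ih =>
    simp only [walkProb]
    rw [sum_comm]
    calc ∑ x ∈ G.neighborFinset o, ∑ u ∈ t, G.walkProb r x u / G.degree o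
        = ∑ x ∈ G.neighborFinset o, (∑ u ∈ t, G.walkProb r x u) / G.degree o := by
          simp only [sum_div]
      _ ≤ ∑ x ∈ G.neighborFinset o, 1 / (G.degree o : ℝ) :=
          sum_le_sum fun x _ => div_le_div_of_nonneg_right (ih x) (Nat.cast_nonneg _)
      _ ≤ 1 := by
          rw [sum_const, card_neighborFinset_eq_degree, nsmul_eq_mul, mul_one_div]
          exact div_self_le_one _

theorem exp_neg_sum_log_degree_le_walkProb {o u : V} (w : G.Walk o u) :
    exp (-∑ k ∈ range w.length, log (G.degree (w.getVert k))) ≤ G.walkProb w.length o u := by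
  induction w with
  | nil => simp [walkProb]
  | @cons o x u hadj w ih =>
    have hdeg : (0 : ℝ) < G.degree o := mod_cast (G.degree_pos_iff_exists_adj o).mpr ⟨x, hadj⟩
    simp only [Walk.length_cons, walkProb]
    rw [sum_range_succ', Walk.getVert_zero]
    simp only [Walk.getVert_cons_succ]
    calc exp (-(∑ k ∈ range w.length, log (G.degree (w.getVert k)) + log (G.degree o)))
        = exp (-∑ k ∈ range w.length, log (G.degree (w.getVert k))) / G.degree o := by
          rw [neg_add, exp_add, exp_neg (log _), exp_log hdeg, div_eq_mul_inv]
      _ ≤ G.walkProb w.length x u / G.degree o := div_le_div_of_nonneg_right ih hdeg.le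
      _ ≤ ∑ y ∈ G.neighborFinset o, G.walkProb w.length y u / G.degree o :=
          single_le_sum (f := fun y => G.walkProb w.length y u / G.degree o)
            (fun y _ => div_nonneg (G.walkProb_nonneg _ _ _) hdeg.le)
            ((G.mem_neighborFinset _ _).mpr hadj)

theorem card_le_exp_of_forall_exists_walk (t : Finset V) (o : V) (r : ℕ) {L : ℝ}
    (h : ∀ u ∈ t, ∃ w : G.Walk o u, w.length = r ∧
      ∑ k ∈ range w.length, log (G.degree (w.getVert k)) ≤ L) :
    (#t : ℝ) ≤ exp L := by
  calc (#t : ℝ) = ∑ u ∈ t, 1 := by simp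
    _ ≤ ∑ u ∈ t, exp L * G.walkProb r o u := sum_le_sum fun u hu => by
        obtain ⟨w, rfl, hw⟩ := h u hu
        have := G.exp_neg_sum_log_degree_le_walkProb w
        calc (1 : ℝ) = exp L * exp (-L) := by rw [← exp_add, add_neg_cancel, exp_zero]
          _ ≤ exp L * G.walkProb w.length o u := by
              gcongr
              exact (exp_le_exp.mpr (by linarith)).trans this
    _ ≤ exp L := by
        rw [← mul_sum]
        exact mul_le_of_le_one_right (exp_pos L).le (G.sum_walkProb_le_one t r o)

theorem sum_degree_mul_degree_rpow_le (x : V) {θ L : ℝ} (hθ : 0 ≤ θ)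
    (hx : log (G.degree x) ≤ L) (hy : ∀ y ∈ G.neighborFinset x, log (G.degree y) ≤ L) :
    ∑ y ∈ G.neighborFinset x, ((G.degree x : ℝ) * G.degree y) ^ θ ≤
      exp ((1 + 2 * θ) * L) := by
  have hterm : ∀ y ∈ G.neighborFinset x,
      ((G.degree x : ℝ) * G.degree y) ^ θ ≤ exp (2 * θ * L) := by
    intro y hy'
    have hadj := (G.mem_neighborFinset x y).mp hy'
    have hdx : (0 : ℝ) < G.degree x := mod_cast (G.degree_pos_iff_exists_adj x).mpr ⟨y, hadj⟩
    have hdy : (0 : ℝ) < G.degree y :=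
      mod_cast (G.degree_pos_iff_exists_adj y).mpr ⟨x, hadj.symm⟩
    rw [rpow_def_of_pos (mul_pos hdx hdy), log_mul hdx.ne' hdy.ne', exp_le_exp]
    nlinarith [hy y hy']
  calc ∑ y ∈ G.neighborFinset x, ((G.degree x : ℝ) * G.degree y) ^ θ
      ≤ ∑ y ∈ G.neighborFinset x, exp (2 * θ * L) := sum_le_sum hterm
    _ = G.degree x * exp (2 * θ * L) := by
        rw [sum_const, card_neighborFinset_eq_degree, nsmul_eq_mul]
    _ ≤ exp L * exp (2 * θ * L) := by
        gcongr
        exact (le_exp_log _).trans (exp_le_exp.mpr hx)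
    _ = exp ((1 + 2 * θ) * L) := by rw [← exp_add]; ring_nf

end SimpleGraph

namespace RepulsiveGraph

variable {V : Type} {G : SimpleGraph V} [∀ v, Fintype (G.neighborSet v)] {nstar : ℕ}
  {υ ε : ℝ}

theorem exists_log_degree_le (hrep : RepulsiveGraph G nstar (phiRep υ ε)) (hconn : G.Connected)
    (hn : 2 ≤ nstar) (hυ : 0 < υ) (hε : 0 < 1 + ε) (o : V) {δ : ℝ} (hδ : 0 < δ) :
    ∃ C, ∀ x, log (G.degree x) ≤ δ * G.dist o x + C := by
  obtain ⟨B, hB⟩ := exists_log_le_mul_phiRep_add hυ hε hδ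
  by_cases hhigh : ∃ x₁, nstar < G.degree x₁
  · obtain ⟨x₁, hx₁⟩ := hhigh
    refine ⟨max (log (G.degree x₁)) (δ * G.dist o x₁ + B), fun x => ?_⟩
    rcases le_or_gt (G.degree x) (G.degree x₁) with hle | hlt
    · exact (log_natCast_le_log_natCast hle).trans
        ((le_max_left _ _).trans (le_add_of_nonneg_left (by positivity)))
    · -- a vertex of larger degree than `x₁` is far from `x₁`, hence from `o`
      have hsep := hrep x x₁ (fun h => hlt.ne' (h ▸ rfl)) (hx₁.trans hlt) hx₁
      rw [max_eq_left (by exact_mod_cast hlt.le)] at hsep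
      have htri : (G.dist x x₁ : ℝ) ≤ G.dist o x + G.dist o x₁ := by
        have := hconn.dist_triangle (u := x) (v := o) (w := x₁)
        rw [show G.dist x o = G.dist o x from SimpleGraph.dist_comm] at this
        exact_mod_cast this
      calc log (G.degree x) ≤ δ * phiRep υ ε (G.degree x) + B :=
            hB _ (exp_one_lt_natCast (by omega))
        _ ≤ δ * (G.dist o x + G.dist o x₁) + B := by gcongr; exact hsep.trans htri
        _ ≤ _ := by rw [mul_add, add_assoc]; gcongr; exact le_max_right _ _
  · simp only [not_exists, not_lt] at hhigh
    refine ⟨log nstar, fun x => ?_⟩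
    have hdist : 0 ≤ δ * G.dist o x := by positivity
    linarith [log_natCast_le_log_natCast (hhigh x)]

theorem sum_log_degree_getVert_le (hrep : RepulsiveGraph G nstar (phiRep υ ε)) (hn : 2 ≤ nstar)
    (hυ : 0 < υ) (hε : 0 ≤ 1 + ε) {o u : V} {δ C : ℝ} (hδ : 0 ≤ δ)
    (hC : ∀ x, log (G.degree x) ≤ δ * G.dist o x + C) (w : G.Walk o u) (hw : w.IsPath) :
    ∑ k ∈ range w.length, log (G.degree (w.getVert k)) ≤
      (growthExponent nstar υ ε + δ) * w.length + C := by
  set A := log ((nstar : ℝ) + 1) / phiRep υ ε ((nstar : ℝ) + 1)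
  have hexp := exp_one_lt_natCast_add_one hn
  have hA : 0 ≤ A := log_div_phiRep_nonneg hυ hexp
  have hC0 : 0 ≤ C := by simpa using (log_natCast_nonneg _).trans (hC o)
  have hdist {k l : ℕ} (hkl : k ≤ l) :
      (G.dist (w.getVert k) (w.getVert l) : ℝ) ≤ l - k := by
    rw [← Nat.cast_sub hkl]
    exact_mod_cast w.dist_getVert_le hkl
  -- high-degree vertices of a path are spaced out by the repulsion
  have hhigh : ∑ k ∈ range w.length with nstar < G.degree (w.getVert k),
      log (G.degree (w.getVert k)) ≤ A * w.length + (δ * w.length + C) := by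
    refine sum_le_of_le_mul_gap _ _ hA (by positivity) (fun k hk l hl hkl => ?_) fun k hk => ?_
    · simp only [mem_filter, mem_range] at hk hl
      have hne : w.getVert k ≠ w.getVert l := fun h =>
        hkl.ne (hw.getVert_injOn hk.1.le hl.1.le h)
      have hmax :
          (nstar : ℝ) + 1 ≤ max (G.degree (w.getVert k) : ℝ) (G.degree (w.getVert l)) :=
        le_max_of_le_left (by exact_mod_cast hk.2)
      calc log (G.degree (w.getVert k))
          ≤ log (max (G.degree (w.getVert k) : ℝ) (G.degree (w.getVert l))) :=
            log_le_log (by exact_mod_cast Nat.zero_lt_of_lt hk.2) (le_max_left _ _)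
        _ ≤ A * phiRep υ ε (max (G.degree (w.getVert k) : ℝ) (G.degree (w.getVert l))) :=
            log_le_div_mul_phiRep hυ hε hexp hmax
        _ ≤ A * (l - k) :=
            mul_le_mul_of_nonneg_left ((hrep _ _ hne hk.2 hl.2).trans (hdist hkl.le)) hA
    · have hkr : (k : ℝ) ≤ w.length := mod_cast (mem_range.mp (mem_filter.mp hk).1).le
      have hdist_o := hdist (Nat.zero_le k)
      rw [w.getVert_zero] at hdist_o
      nlinarith [hC (w.getVert k)]
  have hlow : ∑ k ∈ range w.length with ¬nstar < G.degree (w.getVert k),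
      log (G.degree (w.getVert k)) ≤ log nstar * w.length := by
    calc _ ≤ ∑ k ∈ range w.length with ¬nstar < G.degree (w.getVert k), log nstar :=
          sum_le_sum fun k hk => log_natCast_le_log_natCast (not_lt.mp (mem_filter.mp hk).2)
      _ ≤ log nstar * w.length := by
          rw [sum_const, nsmul_eq_mul, mul_comm]
          gcongr
          exact (card_filter_le _ _).trans (card_range _).le
  rw [← sum_filter_add_sum_filter_not _ (fun k => nstar < G.degree (w.getVert k)), growthExponent]
  linarith

theorem card_le_exp_of_forall_dist_eq (hrep : RepulsiveGraph G nstar (phiRep υ ε))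
    (hconn : G.Connected) (hn : 2 ≤ nstar) (hυ : 0 < υ) (hε : 0 ≤ 1 + ε) {o : V}
    {δ C : ℝ} (hδ : 0 ≤ δ) (hC : ∀ x, log (G.degree x) ≤ δ * G.dist o x + C)
    (t : Finset V) (r : ℕ) (ht : ∀ x ∈ t, G.dist o x = r) :
    (#t : ℝ) ≤ exp ((growthExponent nstar υ ε + δ) * r + C) :=
  G.card_le_exp_of_forall_exists_walk t o r fun u hu => by
    obtain ⟨w, hw, hlen⟩ := hconn.exists_path_of_dist o u
    refine ⟨w, hlen.trans (ht u hu), ?_⟩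
    have := hrep.sum_log_degree_getVert_le hn hυ hε hδ hC w hw
    rwa [hlen, ht u hu] at this ⊢

theorem sum_le_of_forall_dist_eq (hrep : RepulsiveGraph G nstar (phiRep υ ε))
    (hconn : G.Connected) (hn : 2 ≤ nstar) (hυ : 0 < υ) (hε : 0 ≤ 1 + ε) {θ : ℝ}
    (hθ : 0 ≤ θ) (α : ℝ) {o : V} {δ C : ℝ} (hδ : 0 ≤ δ)
    (hC : ∀ x, log (G.degree x) ≤ δ * G.dist o x + C)
    (t : Finset V) (r : ℕ) (ht : ∀ x ∈ t, G.dist o x = r) :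
    ∑ x ∈ t, (∑ y ∈ G.neighborFinset x, ((G.degree x : ℝ) * G.degree y) ^ θ) *
        exp (-α * G.dist o x) ≤
      exp (r * (growthExponent nstar υ ε + (2 + 2 * θ) * δ - α)) *
        exp (C + (1 + 2 * θ) * (δ + C)) := by
  have hterm : ∀ x ∈ t, (∑ y ∈ G.neighborFinset x, ((G.degree x : ℝ) * G.degree y) ^ θ) *
      exp (-α * G.dist o x) ≤ exp ((1 + 2 * θ) * (δ * (r + 1) + C)) * exp (-α * r) := by
    intro x hx
    rw [ht x hx]
    gcongr
    refine G.sum_degree_mul_degree_rpow_le x hθ ?_ fun y hy => ?_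
    · have := hC x
      rw [ht x hx] at this
      nlinarith
    · have hdist : (G.dist o y : ℝ) ≤ r + 1 := by
        have := hconn.dist_triangle (u := o) (v := x) (w := y)
        rw [ht x hx, SimpleGraph.dist_eq_one_iff_adj.mpr ((G.mem_neighborFinset x y).mp hy)] at this
        exact_mod_cast this
      nlinarith [hC y]
  calc _ ≤ #t * (exp ((1 + 2 * θ) * (δ * (r + 1) + C)) * exp (-α * r)) := by
        rw [← nsmul_eq_mul]
        exact sum_le_card_nsmul _ _ _ hterm
    _ ≤ exp ((growthExponent nstar υ ε + δ) * r + C) *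
          (exp ((1 + 2 * θ) * (δ * (r + 1) + C)) * exp (-α * r)) := by
        gcongr
        exact hrep.card_le_exp_of_forall_dist_eq hconn hn hυ hε hδ hC t r ht
    _ = _ := by
        simp only [← exp_add]
        ring_nf

end RepulsiveGraph

theorem summability_for_repulsive_graphs_general
    (nstar : ℕ) (hn : 2 < nstar) (υ ε : ℝ) (hυ : 0 < υ) (hε : 0 < ε)
    (θ : ℝ) (hθ : 0 < θ) :
    ∃ α₀ : ℝ, 0 ≤ α₀ ∧
      ∀ (V : Type) (_ : Countable V) (G : SimpleGraph V)
        (_ : ∀ v : V, Fintype (G.neighborSet v)),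
        G.Connected → RepulsiveGraph G nstar (phiRep υ ε) →
        ∀ α : ℝ, α₀ < α → ∀ o : V,
          Summable fun x : V =>
            (∑ y ∈ G.neighborFinset x, ((G.degree x : ℝ) * (G.degree y : ℝ)) ^ θ) *
              Real.exp (-α * (G.dist o x : ℝ)) := by
  refine ⟨growthExponent nstar υ ε, growthExponent_nonneg hn.le hυ, ?_⟩
  intro V _ G _ hconn hrep α hα o
  obtain ⟨δ, hδ, hδα⟩ := exists_pos_mul_lt (sub_pos.mpr hα) (2 + 2 * θ)
  obtain ⟨C, hC⟩ := hrep.exists_log_degree_le hconn hn.le hυ (by linarith) o hδ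
  exact summable_of_sum_le_on_fibers (fun x => by positivity) (G.dist o)
    ((summable_exp_nat_mul_iff.mpr (by linarith)).mul_right _)
    (hrep.sum_le_of_forall_dist_eq hconn hn.le hυ (by linarith) hθ.le α hδ.le hC)

/-- **Theorem 5 (summability for repulsive graphs).** Let `n_* > 2`, `υ, ε > 0` and
`φ(b) = υ log b (log log b)^{1+ε}` with `φ(n_*+1) > 1`. Then for every `θ > 0` there is
`α₀ ≥ 0`, depending only on `θ, n_*, υ, ε`, such that for every graph `G ∈ 𝔾(n_*,φ)`,
every `α > α₀` and every root `o`, one has `Θ(α,θ) < ∞`. -/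
theorem summability_for_repulsive_graphs
    (nstar : ℕ) (hn : 2 < nstar) (υ ε : ℝ) (hυ : 0 < υ) (hε : 0 < ε)
    (hφ1 : 1 < phiRep υ ε ((nstar : ℝ) + 1)) (θ : ℝ) (hθ : 0 < θ) :
    ∃ α₀ : ℝ, 0 ≤ α₀ ∧
      ∀ (V : Type) (_ : Countable V) (G : SimpleGraph V)
        (_ : ∀ v : V, Fintype (G.neighborSet v)),
        G.Connected → RepulsiveGraph G nstar (phiRep υ ε) →
        ∀ α : ℝ, α₀ < α → ∀ o : V,
          Summable fun x : V =>
            (∑ y ∈ G.neighborFinset x, ((G.degree x : ℝ) * (G.degree y : ℝ)) ^ θ) *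
              Real.exp (-α * (G.dist o x : ℝ)) :=
  summability_for_repulsive_graphs_general nstar hn υ ε hυ hε θ hθ
end
end

section
/- Lemma 3 (reduction of Θ to a single-vertex sum). Let G ∈ 𝔾(n_*, φ) with φ(n_* + 1) > 1. Then for every α > 0 and θ > 0, Θ(α,θ) ≤ n_*^θ (e^α + 1) T_o(α,θ), where T_o(α,θ) = Σ_{y∈V} n(y)^{1+θ} exp(−α ρ(o,y)) (the inequality being understood in [0, ∞]). -/
/-!
Two adjacent vertices are at distance `1 < φ(n_* + 1)`, so the repulsion condition forbids both
of them to have degree above `n_*`; hence `(n(x) n(y))^θ ≤ n_*^θ (n(x)^θ + n(y)^θ)` on every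
edge. Moving the weight `exp(-α ρ(o,x))` to a neighbour `y` costs at most a factor `e^α`, and
summing over edges counts each vertex `y` exactly `n(y)` times, which turns `n(y)^θ` into
`n(y)^{1+θ}`.
-/

open Real

noncomputable section

open SimpleGraph ENNReal

theorem Real.mul_rpow_le_rpow_mul_add_of_min_le {a b c θ : ℝ} (ha : 0 ≤ a) (hb : 0 ≤ b)
    (hθ : 0 ≤ θ) (h : min a b ≤ c) : (a * b) ^ θ ≤ c ^ θ * (a ^ θ + b ^ θ) := by
  have haθ := rpow_nonneg ha θ
  have hbθ := rpow_nonneg hb θ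
  rw [mul_rpow ha hb]
  rcases min_le_iff.1 h with h | h
  · nlinarith [rpow_le_rpow ha h hθ]
  · nlinarith [rpow_le_rpow hb h hθ]

namespace SimpleGraph

variable {V : Type} {G : SimpleGraph V}

theorem Adj.exp_neg_mul_dist_le {x y : V} (hxy : G.Adj x y) (o : V) {α : ℝ} (hα : 0 ≤ α) :
    exp (-α * G.dist o x) ≤ exp α * exp (-α * G.dist o y) := by
  have hdist : (G.dist o y : ℝ) ≤ G.dist o x + 1 := by
    exact_mod_cast (hxy.reachable.dist_triangle_right o).trans_eq
      (by rw [dist_eq_one_iff_adj.2 hxy])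
  rw [← exp_add, exp_le_exp]
  nlinarith

variable (G) [∀ v : V, Fintype (G.neighborSet v)]

theorem tsum_sum_neighborFinset_comm (g : V → V → ℝ≥0∞) :
    ∑' x, ∑ y ∈ G.neighborFinset x, g x y = ∑' y, ∑ x ∈ G.neighborFinset y, g x y := by
  rw [tsum_congr fun x => sum_eq_tsum_indicator (g x) _,
    tsum_congr fun y => sum_eq_tsum_indicator (g · y) _, ENNReal.tsum_comm]
  refine tsum_congr fun y => tsum_congr fun x => ?_
  classical
  simp only [coe_neighborFinset, Set.indicator_apply, mem_neighborSet, adj_comm]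

theorem tsum_sum_neighborFinset_le_of_le_add (f : V → ℝ≥0∞) (g : V → V → ℝ≥0∞)
    {a b : ℝ≥0∞} (h : ∀ x y, G.Adj x y → g x y ≤ a * f x + b * f y) :
    ∑' x, ∑ y ∈ G.neighborFinset x, g x y ≤ (a + b) * ∑' x, G.degree x * f x := by
  calc ∑' x, ∑ y ∈ G.neighborFinset x, g x y
      ≤ ∑' x, ∑ y ∈ G.neighborFinset x, (a * f x + b * f y) :=
        ENNReal.tsum_le_tsum fun x => Finset.sum_le_sum fun y hy =>
          h x y ((G.mem_neighborFinset x y).1 hy)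
    _ = ∑' x, ∑ y ∈ G.neighborFinset x, a * f x +
          ∑' x, ∑ y ∈ G.neighborFinset x, b * f y := by
        simp_rw [Finset.sum_add_distrib]
        exact ENNReal.tsum_add
    _ = (a + b) * ∑' x, G.degree x * f x := by
        rw [G.tsum_sum_neighborFinset_comm fun _ y => b * f y]
        simp [ENNReal.tsum_mul_left, mul_left_comm, add_mul]

end SimpleGraph

namespace RepulsiveGraph

variable {V : Type} {G : SimpleGraph V} [∀ v : V, Fintype (G.neighborSet v)] {nstar : ℕ}
  {φ : ℝ → ℝ}

theorem min_degree_le_of_adj (hrep : RepulsiveGraph G nstar φ)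
    (hmono : MonotoneOn φ (Set.Ioi (nstar : ℝ))) (hφ1 : 1 < φ ((nstar : ℝ) + 1)) {x y : V}
    (hxy : G.Adj x y) : min (G.degree x) (G.degree y) ≤ nstar := by
  by_contra! h
  rw [lt_min_iff] at h
  have hφ := hrep x y hxy.ne h.1 h.2
  have hmax : (nstar : ℝ) + 1 ≤ max (G.degree x : ℝ) (G.degree y) :=
    le_max_of_le_left (by exact_mod_cast h.1)
  have := hmono (by simp) ((lt_add_one _).trans_le hmax) hmax
  rw [dist_eq_one_iff_adj.2 hxy] at hφ
  push_cast at hφ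
  linarith

theorem degree_mul_degree_rpow_le (hrep : RepulsiveGraph G nstar φ)
    (hmono : MonotoneOn φ (Set.Ioi (nstar : ℝ))) (hφ1 : 1 < φ ((nstar : ℝ) + 1)) {θ : ℝ}
    (hθ : 0 ≤ θ) {x y : V} (hxy : G.Adj x y) :
    ((G.degree x : ℝ) * G.degree y) ^ θ ≤
      (nstar : ℝ) ^ θ * ((G.degree x : ℝ) ^ θ + (G.degree y : ℝ) ^ θ) :=
  mul_rpow_le_rpow_mul_add_of_min_le (Nat.cast_nonneg _) (Nat.cast_nonneg _) hθ <| by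
    rw [← Nat.cast_min]
    exact_mod_cast hrep.min_degree_le_of_adj hmono hφ1 hxy

end RepulsiveGraph

/-- **Lemma 3 (reduction of `Θ` to a single-vertex sum).** If `G ∈ 𝔾(n_*,φ)` with
`φ(n_*+1) > 1`, then for all `α, θ > 0`, in `[0,∞]`:
`Θ(α,θ) ≤ n_*^θ (e^α + 1) T_o(α,θ)`, where
`T_o(α,θ) = Σ_y n(y)^{1+θ} exp(-α ρ(o,y))`. -/
theorem theta_le_single_vertex_sum
    {V : Type} [Countable V] (G : SimpleGraph V) [∀ v : V, Fintype (G.neighborSet v)]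
    (hconn : G.Connected) (nstar : ℕ) (hn : 2 < nstar)
    (φ : ℝ → ℝ) (hmono : StrictMonoOn φ (Set.Ioi (nstar : ℝ)))
    (hφ1 : 1 < φ ((nstar : ℝ) + 1))
    (hrep : RepulsiveGraph G nstar φ)
    (o : V) (α θ : ℝ) (hα : 0 < α) (hθ : 0 < θ) :
    (∑' x : V, ENNReal.ofReal
        ((∑ y ∈ G.neighborFinset x, ((G.degree x : ℝ) * (G.degree y : ℝ)) ^ θ) *
          Real.exp (-α * (G.dist o x : ℝ)))) ≤
      ENNReal.ofReal ((nstar : ℝ) ^ θ * (Real.exp α + 1)) *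
        ∑' y : V, ENNReal.ofReal
          ((G.degree y : ℝ) ^ (1 + θ) * Real.exp (-α * (G.dist o y : ℝ))) := by
  set d : V → ℝ := fun v => G.degree v
  set e : V → ℝ := fun v => exp (-α * G.dist o v)
  set c : ℝ := (nstar : ℝ) ^ θ
  have hc : 0 ≤ c := rpow_nonneg (Nat.cast_nonneg _) θ
  have hedge : ∀ x y, G.Adj x y →
      (d x * d y) ^ θ * e x ≤ c * (d x ^ θ * e x) + c * exp α * (d y ^ θ * e y) := by
    intro x y hxy
    have hdeg := hrep.degree_mul_degree_rpow_le hmono.monotoneOn hφ1 hθ.le hxy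
    have hexp := hxy.exp_neg_mul_dist_le o hα.le
    linarith [mul_le_mul_of_nonneg_right hdeg (exp_pos (-α * G.dist o x)).le,
      mul_le_mul_of_nonneg_left hexp
        (mul_nonneg hc (rpow_nonneg (Nat.cast_nonneg (G.degree y)) θ))]
  have hdeg : ∀ v, (G.degree v : ℝ≥0∞) * ENNReal.ofReal (d v ^ θ * e v) =
      ENNReal.ofReal (d v ^ (1 + θ) * e v) := by
    intro v
    rw [← ofReal_natCast, ← ofReal_mul (Nat.cast_nonneg _),
      rpow_one_add' (Nat.cast_nonneg _) (by positivity), mul_assoc]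
  calc ∑' x, ENNReal.ofReal ((∑ y ∈ G.neighborFinset x, (d x * d y) ^ θ) * e x)
      = ∑' x, ∑ y ∈ G.neighborFinset x, ENNReal.ofReal ((d x * d y) ^ θ * e x) := by
        refine tsum_congr fun x => ?_
        rw [Finset.sum_mul, ofReal_sum_of_nonneg fun y _ => by positivity]
    _ ≤ (ENNReal.ofReal c + ENNReal.ofReal (c * exp α)) *
          ∑' x, (G.degree x : ℝ≥0∞) * ENNReal.ofReal (d x ^ θ * e x) := by
        refine G.tsum_sum_neighborFinset_le_of_le_add _ _ fun x y hxy => ?_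
        rw [← ofReal_mul hc, ← ofReal_mul (by positivity),
          ← ofReal_add (by positivity) (by positivity)]
        exact ofReal_le_ofReal (hedge x y hxy)
    _ = _ := by
        rw [← ofReal_add hc (by positivity), tsum_congr hdeg]
        congr 2
        ring
end
end

section
/- Lemma 5 (degree growth in balls of repulsive graphs). Let n_* > 2 be an integer and φ: (n_*, ∞) → (1, ∞) be strictly increasing, and let G ∈ 𝔾(n_*, φ). Then for every vertex x ∈ V there exists N_x ∈ ℕ such that for all N ≥ N_x and all vertices y with ρ(x,y) ≤ N: either n(y) ≤ n_* or φ(n(y)) ≤ 2N (equivalently, max_{y ∈ B(N,x)} n(y) ≤ max{n_*, φ^{−1}(2N)}). -/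
/-!
Two distinct vertices of degree above `n_*` repel each other: each lies at distance at least
`φ` of its own degree from the other. So if there are two such vertices `w ≠ v`, then once the
ball `B(N,x)` contains both, every high-degree `y` in it has another high-degree vertex in the
same ball, at distance at most `2N`. If there is at most one high-degree vertex, `N_x` only has
to dominate `φ` of its degree.
-/

open Real

noncomputable section

theorem Set.Finite.exists_nat_forall_le {α : Type*} {s : Set α} (hs : s.Finite) (f : α → ℝ) :
    ∃ B : ℕ, ∀ y ∈ s, f y ≤ B := by
  obtain ⟨b, hb⟩ := (hs.image f).bddAbove
  obtain ⟨B, hbB⟩ := exists_nat_ge b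
  exact ⟨B, fun y hy => (hb (Set.mem_image_of_mem f hy)).trans hbB⟩

namespace RepulsiveGraph

variable {V : Type} {G : SimpleGraph V} [∀ v : V, Fintype (G.neighborSet v)] {nstar : ℕ}
  {φ : ℝ → ℝ}

theorem apply_degree_le_dist (hrep : RepulsiveGraph G nstar φ)
    (hmono : MonotoneOn φ (Set.Ioi (nstar : ℝ))) {y z : V} (hyz : y ≠ z) (hy : nstar < G.degree y)
    (hz : nstar < G.degree z) : φ (G.degree y) ≤ G.dist y z := by
  have hy' : (nstar : ℝ) < G.degree y := by exact_mod_cast hy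
  calc φ (G.degree y) ≤ φ (max (G.degree y : ℝ) (G.degree z)) :=
        hmono hy' (lt_max_of_lt_left hy') (le_max_left _ _)
    _ ≤ G.dist y z := hrep y z hyz hy hz

theorem apply_degree_le_two_mul (hrep : RepulsiveGraph G nstar φ) (hconn : G.Connected)
    (hmono : MonotoneOn φ (Set.Ioi (nstar : ℝ)))
    {x y z : V} (hyz : y ≠ z) (hy : nstar < G.degree y) (hz : nstar < G.degree z) {N : ℕ}
    (hxy : G.dist x y ≤ N) (hxz : G.dist x z ≤ N) : φ (G.degree y) ≤ 2 * N := by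
  have hyz_le : G.dist y z ≤ 2 * N :=
    calc G.dist y z ≤ G.dist y x + G.dist x z := hconn.dist_triangle
      _ = G.dist x y + G.dist x z := by rw [SimpleGraph.dist_comm]
      _ ≤ 2 * N := by omega
  calc φ (G.degree y) ≤ G.dist y z := hrep.apply_degree_le_dist hmono hyz hy hz
    _ ≤ 2 * N := by exact_mod_cast hyz_le

end RepulsiveGraph

/-- **Lemma 5 (degree growth in balls of repulsive graphs).** Let `n_* > 2`, let
`φ : (n_*,∞) → (1,∞)` be strictly increasing, and `G ∈ 𝔾(n_*,φ)`. Then for every vertex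
`x` there is `N_x ∈ ℕ` such that for all `N ≥ N_x` and all `y` with `ρ(x,y) ≤ N`:
either `n(y) ≤ n_*` or `φ(n(y)) ≤ 2N`. -/
theorem degree_growth_in_balls
    {V : Type} [Countable V] (G : SimpleGraph V) [∀ v : V, Fintype (G.neighborSet v)]
    (hconn : G.Connected) (nstar : ℕ) (hn : 2 < nstar)
    (φ : ℝ → ℝ) (hmono : StrictMonoOn φ (Set.Ioi (nstar : ℝ)))
    (hφgt1 : ∀ b : ℝ, (nstar : ℝ) < b → 1 < φ b)
    (hrep : RepulsiveGraph G nstar φ) :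
    ∀ x : V, ∃ Nx : ℕ, ∀ N : ℕ, Nx ≤ N → ∀ y : V, G.dist x y ≤ N →
      G.degree y ≤ nstar ∨ φ (G.degree y : ℝ) ≤ 2 * (N : ℝ) := by
  intro x
  rcases Set.subsingleton_or_nontrivial {v | nstar < G.degree v} with hS | ⟨w, hw, v, hv, hwv⟩
  · obtain ⟨B, hB⟩ := hS.finite.exists_nat_forall_le fun y => φ (G.degree y)
    refine ⟨B, fun N hN y _ => (le_or_gt _ _).imp_right fun hy => ?_⟩
    have hBN : (B : ℝ) ≤ N := by exact_mod_cast hN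
    linarith [hB y hy, hBN]
  · refine ⟨max (G.dist x w) (G.dist x v), fun N hN y hxy => (le_or_gt _ _).imp_right
      fun hy => ?_⟩
    rcases eq_or_ne y w with rfl | hyw
    · exact hrep.apply_degree_le_two_mul hconn hmono.monotoneOn hwv hy hv hxy (by omega)
    · exact hrep.apply_degree_le_two_mul hconn hmono.monotoneOn hyw hy hw hxy (by omega)
end
end
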